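/- arXiv:1101.0049 — 11 statements merged into one kernel-verified Lean document; each statement's English description precedes it below -/
import Mathlib

section
/- Let α be a partial isometry of the chain {1,...,n} (an injective partial map α from a subset of {1,...,n} to {1,...,n} satisfying |x−y| = |xα−yα| for all x,y in the domain). If α has at least two fixed points, then every element of the domain of α is a fixed point (i.e., α is a partial identity). -/
theorem partial_isometry_two_fixed_points_partial_identity
    (n : ℕ) (D : Set ℕ) (hD : D ⊆ Set.Icc 1 n) (α : ℕ → ℕ)
    (hmap : ∀ x ∈ D, α x ∈ Set.Icc 1 n)
    (hinj : ∀ x ∈ D, ∀ y ∈ D, α x = α y → x = y)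
    (hiso : ∀ x ∈ D, ∀ y ∈ D, ((x : ℤ) - y).natAbs = ((α x : ℤ) - α y).natAbs)
    (x y : ℕ) (hx : x ∈ D) (hy : y ∈ D) (hxy : x ≠ y)
    (hfx : α x = x) (hfy : α y = y) :
    ∀ z ∈ D, α z = z := by
  intro z hz
  have h1 := hiso z hz x hx
  have h2 := hiso z hz y hy
  rw [hfx] at h1
  rw [hfy] at h2
  rw [Int.natAbs_eq_natAbs_iff] at h1 h2
  have : (α z : ℤ) = z := by
    rcases h1 with h1 | h1 <;> rcases h2 with h2 | h2 <;> omega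
  exact_mod_cast this
end

section
/- Let α be a partial isometry of the chain {1,...,n} whose unique fixed point is i (with 1 < i < n). Then for every x in the domain of α, x + α(x) = 2i. -/
theorem partial_isometry_unique_fixed_point_sum
    (n : ℕ) (D : Set ℕ) (hD : D ⊆ Set.Icc 1 n) (α : ℕ → ℕ)
    (hmap : ∀ x ∈ D, α x ∈ Set.Icc 1 n)
    (hinj : ∀ x ∈ D, ∀ y ∈ D, α x = α y → x = y)
    (hiso : ∀ x ∈ D, ∀ y ∈ D, ((x : ℤ) - y).natAbs = ((α x : ℤ) - α y).natAbs)
    (i : ℕ) (hi1 : 1 < i) (hin : i < n)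
    (hfix : {x | x ∈ D ∧ α x = x} = {i}) :
    ∀ x ∈ D, x + α x = 2 * i := by
  have hiD : i ∈ D ∧ α i = i := by
    have : i ∈ ({i} : Set ℕ) := rfl
    rw [← hfix] at this
    exact this
  intro x hx
  have h := hiso x hx i hiD.1
  rw [hiD.2] at h
  rw [Int.natAbs_eq_natAbs_iff] at h
  rcases h with h | h
  · have hxa : α x = x := by omega
    have : x ∈ {x | x ∈ D ∧ α x = x} := ⟨hx, hxa⟩
    rw [hfix] at this
    have : x = i := this
    omega
  · omega
end

section
/- The number of order-preserving partial isometries of the chain {1,...,n} with image of size exactly 2 equals n(n−1)(2n−1)/6, for all n ≥ 2. -/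
/-- `G` is the graph of a partial isometry of the chain `{1,...,n}`:
a functional, injective relation contained in `{1,...,n} × {1,...,n}`
that preserves distances. -/
def IsPartialIsometryGraph (n : ℕ) (G : Finset (ℕ × ℕ)) : Prop :=
  G ⊆ Finset.Icc 1 n ×ˢ Finset.Icc 1 n ∧
  (∀ p ∈ G, ∀ q ∈ G, p.1 = q.1 → p = q) ∧
  (∀ p ∈ G, ∀ q ∈ G, p.2 = q.2 → p = q) ∧
  (∀ p ∈ G, ∀ q ∈ G, ((p.1 : ℤ) - q.1).natAbs = ((p.2 : ℤ) - q.2).natAbs)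

/-- The graph `G` is order-preserving. -/
def IsOrderPreservingGraph (G : Finset (ℕ × ℕ)) : Prop :=
  ∀ p ∈ G, ∀ q ∈ G, p.1 ≤ q.1 → p.2 ≤ q.2

/-- Parameter set: difference `k` and starting points `a`, `b`. -/
def psiS (n : ℕ) : Finset ((_ : ℕ) × ℕ × ℕ) :=
  (Finset.Icc 1 (n-1)).sigma (fun k => Finset.Icc 1 (n-k) ×ˢ Finset.Icc 1 (n-k))

def psiF : ((_ : ℕ) × ℕ × ℕ) → Finset (ℕ × ℕ) :=
  fun x => {(x.2.1, x.2.2), (x.2.1 + x.1, x.2.2 + x.1)}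

lemma sq_sum (m : ℕ) : ∑ k ∈ Finset.Icc 1 m, (k:ℚ) * k = m*(m+1)*(2*m+1)/6 := by
  induction m with
  | zero => simp
  | succ m ih =>
    rw [Finset.sum_Icc_succ_top (by omega)]
    push_cast
    rw [ih]
    ring

lemma set_eq (n : ℕ) (hn : 2 ≤ n) :
    {G : Finset (ℕ × ℕ) | IsPartialIsometryGraph n G ∧ IsOrderPreservingGraph G ∧
      (G.image Prod.snd).card = 2} = ↑((psiS n).image psiF) := by
  ext G
  simp only [Set.mem_setOf_eq, Finset.coe_image, Set.mem_image, Finset.mem_coe,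
    Finset.mem_image, Finset.mem_sigma, Finset.mem_product, Finset.mem_Icc, psiS]
  constructor
  · rintro ⟨⟨hsub, hfun, hinj, hiso⟩, hord, hcard⟩
    have hcardG : G.card = 2 := by
      rw [← hcard]
      rw [Finset.card_image_of_injOn]
      intro p hp q hq h
      exact hinj p hp q hq h
    rw [Finset.card_eq_two] at hcardG
    obtain ⟨p, q, hpq, hG⟩ := hcardG
    have hp : p ∈ G := by rw [hG]; simp
    have hq : q ∈ G := by rw [hG]; simp
    have hne1 : p.1 ≠ q.1 := fun h => hpq (hfun p hp q hq h)
    wlog h1 : p.1 < q.1 generalizing p q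
    · exact this q p hpq.symm (by rw [hG]; exact Finset.pair_comm p q) hq hp hne1.symm
        (by omega)
    have h2 : p.2 < q.2 := by
      have := hord p hp q hq h1.le
      have hne2 : p.2 ≠ q.2 := fun h => hpq (hinj p hp q hq h)
      omega
    have hiso' := hiso p hp q hq
    have hk : q.1 - p.1 = q.2 - p.2 := by omega
    have hpmem := hsub hp
    have hqmem := hsub hq
    simp only [Finset.mem_product, Finset.mem_Icc] at hpmem hqmem
    refine ⟨⟨q.1 - p.1, p.1, p.2⟩, ?_, ?_⟩
    · dsimp only
      omega
    · rw [hG]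
      simp only [psiF]
      rw [show ((p.1, p.2) : ℕ × ℕ) = p from rfl]
      rw [show ((p.1 + (q.1 - p.1), p.2 + (q.1 - p.1)) : ℕ × ℕ) = q from
        Prod.ext_iff.mpr ⟨by dsimp; omega, by dsimp; omega⟩]
  · rintro ⟨⟨k, a, b⟩, ⟨⟨hk1, hk2⟩, ⟨ha1, ha2⟩, ⟨hb1, hb2⟩⟩, rfl⟩
    dsimp only at hk1 hk2 ha1 ha2 hb1 hb2
    simp only [psiF]
    have hmem : ∀ p ∈ ({(a, b), (a + k, b + k)} : Finset (ℕ × ℕ)),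
        p = (a, b) ∨ p = (a + k, b + k) := by
      intro p hp
      simpa using hp
    refine ⟨⟨?_, ?_, ?_, ?_⟩, ?_, ?_⟩
    · intro p hp
      rcases hmem p hp with rfl | rfl <;>
        simp only [Finset.mem_product, Finset.mem_Icc] <;> omega
    · intro p hp q hq h
      rcases hmem p hp with rfl | rfl <;> rcases hmem q hq with rfl | rfl <;>
        dsimp only at h ⊢ <;> first | rfl | (rw [Prod.mk.injEq]; omega)
    · intro p hp q hq h
      rcases hmem p hp with rfl | rfl <;> rcases hmem q hq with rfl | rfl <;>
        dsimp only at h ⊢ <;> first | rfl | (rw [Prod.mk.injEq]; omega)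
    · intro p hp q hq
      rcases hmem p hp with rfl | rfl <;> rcases hmem q hq with rfl | rfl <;>
        dsimp only <;> omega
    · intro p hp q hq h
      rcases hmem p hp with rfl | rfl <;> rcases hmem q hq with rfl | rfl <;>
        dsimp only at h ⊢ <;> omega
    · rw [show Finset.image Prod.snd ({(a, b), (a + k, b + k)} : Finset (ℕ × ℕ))
        = {b, b + k} by simp]
      rw [Finset.card_insert_of_notMem (by simp; omega), Finset.card_singleton]

lemma psiF_injOn (n : ℕ) : Set.InjOn psiF (psiS n) := by
  rintro ⟨k, a, b⟩ hx ⟨k', a', b'⟩ hy h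
  simp only [psiS, Finset.coe_sigma, Set.mem_sigma_iff, Finset.mem_coe, Finset.mem_Icc,
    Finset.mem_product] at hx hy
  simp only [psiF] at h
  have h1 : ((a, b) : ℕ × ℕ) ∈ ({(a', b'), (a' + k', b' + k')} : Finset (ℕ × ℕ)) := by
    rw [← h]; simp
  have h2 : ((a + k, b + k) : ℕ × ℕ) ∈ ({(a', b'), (a' + k', b' + k')} : Finset (ℕ × ℕ)) := by
    rw [← h]; simp
  have h3 : ((a', b') : ℕ × ℕ) ∈ ({(a, b), (a + k, b + k)} : Finset (ℕ × ℕ)) := by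
    rw [h]; simp
  simp only [Finset.mem_insert, Finset.mem_singleton, Prod.mk.injEq] at h1 h2 h3
  have : k = k' ∧ a = a' ∧ b = b' := by omega
  obtain ⟨rfl, rfl, rfl⟩ := this
  rfl

theorem count_order_preserving_partial_isometries_height_two (n : ℕ) (hn : 2 ≤ n) :
    ({G : Finset (ℕ × ℕ) | IsPartialIsometryGraph n G ∧ IsOrderPreservingGraph G ∧
      (G.image Prod.snd).card = 2}.ncard : ℚ) =
    (n : ℚ) * ((n : ℚ) - 1) * (2 * (n : ℚ) - 1) / 6 := by
  rw [set_eq n hn, Set.ncard_coe_finset,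
    Finset.card_image_of_injOn (by exact_mod_cast psiF_injOn n)]
  rw [psiS, Finset.card_sigma]
  simp only [Finset.card_product, Nat.card_Icc]
  have h1 : ∑ k ∈ Finset.Icc 1 (n-1), (n - k + 1 - 1) * (n - k + 1 - 1)
      = ∑ k ∈ Finset.Icc 1 (n-1), k * k := by
    apply Finset.sum_nbij' (i := fun k => n - k) (j := fun k => n - k)
    · intro a ha; simp only [Finset.mem_Icc] at ha ⊢; omega
    · intro a ha; simp only [Finset.mem_Icc] at ha ⊢; omega
    · intro a ha; simp only [Finset.mem_Icc] at ha; omega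
    · intro a ha; simp only [Finset.mem_Icc] at ha; omega
    · intro a ha; rfl
  rw [h1]
  push_cast
  rw [sq_sum (n-1), Nat.cast_sub (by omega : 1 ≤ n)]
  push_cast
  ring
end

section
/- For n ≥ p ≥ 2, the number of order-preserving partial isometries of {1,...,n} with domain of size exactly p equals ((2n − p + 1)/(p + 1)) · C(n, p). -/
open Finset

def opIsometryGraphs (n p : ℕ) : Set (Finset (ℕ × ℕ)) :=
  {G | IsPartialIsometryGraph n G ∧ IsOrderPreservingGraph G ∧ (G.image Prod.fst).card = p}

def shiftGraph (d : ℕ) (D : Finset ℕ) : Finset (ℕ × ℕ) :=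
  D.image fun x => (x, x + d)

def upperGraphs (n p m : ℕ) : Set (Finset (ℕ × ℕ)) :=
  {G ∈ opIsometryGraphs n p | ∀ q ∈ G, q.1 + m ≤ q.2}

theorem sum_range_choose_eq_choose_succ (N p : ℕ) :
    ∑ j ∈ range N, j.choose p = N.choose (p + 1) := by
  induction N with
  | zero => simp
  | succ N ih => rw [sum_range_succ, ih, Nat.choose_succ_succ', add_comm]

theorem sum_Ico_choose_sub (n m p : ℕ) :
    ∑ d ∈ Ico m (n + 1), (n - d).choose p = (n + 1 - m).choose (p + 1) := by
  rw [sum_Ico_reflect (fun j => j.choose p) m le_rfl, Nat.sub_self, Nat.Ico_zero_eq_range,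
    sum_range_choose_eq_choose_succ]

namespace IsPartialIsometryGraph

variable {n : ℕ} {G : Finset (ℕ × ℕ)}

theorem card_image_fst (hG : IsPartialIsometryGraph n G) : (G.image Prod.fst).card = G.card :=
  card_image_of_injOn fun q hq r hr => hG.2.1 q hq r hr

theorem image_swap (hG : IsPartialIsometryGraph n G) :
    IsPartialIsometryGraph n (G.image Prod.swap) := by
  obtain ⟨hsub, hfst, hsnd, hdist⟩ := hG
  simp only [IsPartialIsometryGraph, forall_mem_image, Prod.fst_swap, Prod.snd_swap,
    Prod.swap_inj]
  refine ⟨?_, hsnd, hfst, fun q hq r hr => (hdist q hq r hr).symm⟩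
  exact (image_subset_image hsub).trans (image_swap_product _ _).le

theorem isOrderPreservingGraph_image_swap (hG : IsPartialIsometryGraph n G)
    (hO : IsOrderPreservingGraph G) : IsOrderPreservingGraph (G.image Prod.swap) := by
  simp only [IsOrderPreservingGraph, forall_mem_image, Prod.fst_swap, Prod.snd_swap]
  intro q hq r hr hqr
  by_contra! hrq
  have hsnd : q.2 = r.2 := le_antisymm hqr (hO r hr q hq hrq.le)
  exact hrq.ne' (congrArg Prod.fst (hG.2.2.1 q hq r hr hsnd))

theorem snd_sub_fst_eq (hG : IsPartialIsometryGraph n G) (hO : IsOrderPreservingGraph G)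
    {q r : ℕ × ℕ} (hq : q ∈ G) (hr : r ∈ G) : (q.2 : ℤ) - q.1 = r.2 - r.1 := by
  have hdist := hG.2.2.2 q hq r hr
  rcases le_total q.1 r.1 with h | h
  · have := hO q hq r hr h; omega
  · have := hO r hr q hq h; omega

end IsPartialIsometryGraph

theorem image_swap_mem_opIsometryGraphs {n p : ℕ} {G : Finset (ℕ × ℕ)}
    (hG : G ∈ opIsometryGraphs n p) : G.image Prod.swap ∈ opIsometryGraphs n p := by
  obtain ⟨hI, hO, hp⟩ := hG
  refine ⟨hI.image_swap, hI.isOrderPreservingGraph_image_swap hO, ?_⟩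
  rw [hI.image_swap.card_image_fst, card_image_of_injective _ Prod.swap_injective,
    ← hI.card_image_fst, hp]

section shiftGraph

variable {n p d : ℕ} {D : Finset ℕ}

@[simp]
theorem mem_shiftGraph {q : ℕ × ℕ} : q ∈ shiftGraph d D ↔ q.1 ∈ D ∧ q.2 = q.1 + d := by
  obtain ⟨a, b⟩ := q
  simp only [shiftGraph, mem_image, Prod.mk.injEq]
  constructor
  · rintro ⟨x, hx, rfl, rfl⟩
    exact ⟨hx, rfl⟩
  · rintro ⟨ha, rfl⟩
    exact ⟨a, ha, rfl, rfl⟩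

theorem image_fst_shiftGraph : (shiftGraph d D).image Prod.fst = D := by
  simp [shiftGraph, image_image, Function.comp_def]

theorem shiftGraph_mem_opIsometryGraphs (hD : D ⊆ Icc 1 (n - d)) (hcard : D.card = p) :
    shiftGraph d D ∈ opIsometryGraphs n p := by
  have hbound : ∀ x ∈ D, 1 ≤ x ∧ x + d ≤ n := fun x hx => by
    have := mem_Icc.mp (hD hx); omega
  refine ⟨⟨?_, ?_, ?_, ?_⟩, ?_, by rw [image_fst_shiftGraph, hcard]⟩
  · intro q hq
    rw [mem_shiftGraph] at hq
    have := hbound _ hq.1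
    simp only [mem_product, mem_Icc]
    omega
  all_goals
    intro q hq r hr
    rw [mem_shiftGraph] at hq hr
  · exact fun h => Prod.ext h (by omega)
  · exact fun h => Prod.ext (by omega) h
  · omega
  · omega

theorem eq_shiftGraph_image_fst {G : Finset (ℕ × ℕ)} (hG : ∀ q ∈ G, q.2 = q.1 + d) :
    G = shiftGraph d (G.image Prod.fst) := by
  ext ⟨a, b⟩
  simp only [mem_shiftGraph, mem_image]
  constructor
  · intro h
    exact ⟨⟨(a, b), h, rfl⟩, hG _ h⟩
  · rintro ⟨⟨q, hq, rfl⟩, rfl⟩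
    rwa [← hG q hq]

theorem eq_of_shiftGraph_eq {d' : ℕ} {D' : Finset ℕ} (hD : D.Nonempty)
    (h : shiftGraph d D = shiftGraph d' D') : d = d' ∧ D = D' := by
  have hDD' : D = D' := by rw [← image_fst_shiftGraph (d := d) (D := D), h, image_fst_shiftGraph]
  obtain ⟨x, hx⟩ := hD
  have hmem : (x, x + d) ∈ shiftGraph d' D' := h ▸ mem_shiftGraph.mpr ⟨hx, rfl⟩
  exact ⟨by simpa using (mem_shiftGraph.mp hmem).2, hDD'⟩

end shiftGraph

section upperGraphs

variable {n p : ℕ}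

theorem upperGraphs_eq_image (m : ℕ) (hp : 0 < p) :
    upperGraphs n p m = ↑(((Ico m (n + 1)).sigma fun d => powersetCard p (Icc 1 (n - d))).image
      fun x => shiftGraph x.1 x.2) := by
  ext G
  simp only [coe_image, Set.mem_image, mem_coe, mem_sigma, mem_powersetCard, mem_Ico,
    Sigma.exists]
  constructor
  · rintro ⟨⟨hI, hO, hcard⟩, hgap⟩
    obtain ⟨q₀, hq₀⟩ : G.Nonempty := by
      rw [← card_pos, ← hI.card_image_fst, hcard]; exact hp
    have hshift : ∀ q ∈ G, q.2 = q.1 + (q₀.2 - q₀.1) := fun q hq => by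
      have := hI.snd_sub_fst_eq hO hq hq₀
      have := hgap q₀ hq₀
      omega
    have hbound : ∀ q ∈ G, 1 ≤ q.1 ∧ q.2 ≤ n := fun q hq => by
      have := mem_product.mp (hI.1 hq); simp only [mem_Icc] at this; omega
    refine ⟨q₀.2 - q₀.1, G.image Prod.fst, ⟨?_, ?_, hcard⟩, (eq_shiftGraph_image_fst hshift).symm⟩
    · have := hgap q₀ hq₀; have := hbound q₀ hq₀; omega
    · intro x hx
      obtain ⟨q, hq, rfl⟩ := mem_image.mp hx
      have := hshift q hq; have := hbound q hq
      rw [mem_Icc]; omega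
  · rintro ⟨d, D, ⟨hd, hD, hcard⟩, rfl⟩
    refine ⟨shiftGraph_mem_opIsometryGraphs hD hcard, fun q hq => ?_⟩
    rw [mem_shiftGraph] at hq
    omega

theorem ncard_upperGraphs (m : ℕ) (hp : 0 < p) :
    (upperGraphs n p m).ncard = (n + 1 - m).choose (p + 1) := by
  rw [upperGraphs_eq_image m hp, Set.ncard_coe_finset, card_image_of_injOn, card_sigma]
  · simp only [card_powersetCard, Nat.card_Icc, Nat.add_sub_cancel]
    exact sum_Ico_choose_sub n m p
  · rintro ⟨d, D⟩ hdD ⟨d', D'⟩ - h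
    have hD : D.Nonempty := by
      rw [← card_pos, (mem_powersetCard.mp (mem_sigma.mp hdD).2).2]; exact hp
    obtain ⟨rfl, rfl⟩ := eq_of_shiftGraph_eq hD h
    rfl

end upperGraphs

section decomposition

variable {n p : ℕ}

theorem opIsometryGraphs_eq_union :
    opIsometryGraphs n p = upperGraphs n p 0 ∪ Finset.image Prod.swap '' upperGraphs n p 1 := by
  ext G
  constructor
  · intro hG
    by_cases hup : ∀ q ∈ G, q.1 ≤ q.2
    · exact Or.inl ⟨hG, by simpa using hup⟩
    · push Not at hup
      obtain ⟨q₀, hq₀, hlt⟩ := hup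
      refine Or.inr ⟨G.image Prod.swap, ⟨image_swap_mem_opIsometryGraphs hG, ?_⟩, ?_⟩
      · simp only [forall_mem_image, Prod.fst_swap, Prod.snd_swap]
        intro q hq
        have := hG.1.snd_sub_fst_eq hG.2.1 hq hq₀
        omega
      · rw [image_image, Prod.swap_swap_eq, image_id]
  · rintro (hG | ⟨G', hG', rfl⟩)
    · exact hG.1
    · exact image_swap_mem_opIsometryGraphs hG'.1

theorem disjoint_upperGraphs_image_swap (hp : 0 < p) :
    Disjoint (upperGraphs n p 0) (Finset.image Prod.swap '' upperGraphs n p 1) := by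
  refine Set.disjoint_left.mpr ?_
  rintro _ ⟨⟨-, -, hcard⟩, hup⟩ ⟨G, ⟨-, hlow⟩, rfl⟩
  obtain ⟨q, hq⟩ : G.Nonempty := by
    have : ((G.image Prod.swap).image Prod.fst).Nonempty := card_pos.mp (hcard ▸ hp)
    simpa using this
  have hle := hup q.swap (mem_image_of_mem _ hq)
  have hlt := hlow q hq
  simp only [Prod.fst_swap, Prod.snd_swap] at hle
  omega

theorem ncard_opIsometryGraphs (hp : 0 < p) :
    (opIsometryGraphs n p).ncard = (n + 1).choose (p + 1) + n.choose (p + 1) := by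
  have hfinite (m : ℕ) : (upperGraphs n p m).Finite := by
    rw [upperGraphs_eq_image m hp]; exact finite_toSet _
  rw [opIsometryGraphs_eq_union, Set.ncard_union_eq (disjoint_upperGraphs_image_swap hp)
    (hfinite 0) ((hfinite 1).image _), Set.ncard_image_of_injective _
    (image_injective Prod.swap_injective), ncard_upperGraphs 0 hp, ncard_upperGraphs 1 hp,
    Nat.sub_zero, Nat.add_sub_cancel]

end decomposition

theorem count_order_preserving_partial_isometries_height_p_general (n p : ℕ) (hp : 2 ≤ p) :
    ({G : Finset (ℕ × ℕ) | IsPartialIsometryGraph n G ∧ IsOrderPreservingGraph G ∧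
      (G.image Prod.fst).card = p}.ncard : ℚ) =
    ((2 * (n : ℚ) - (p : ℚ) + 1) / ((p : ℚ) + 1)) * (n.choose p : ℚ) := by
  change ((opIsometryGraphs n p).ncard : ℚ) = _
  have hpascal : ((n + 1).choose (p + 1) : ℚ) = n.choose p + n.choose (p + 1) := by
    exact_mod_cast Nat.choose_succ_succ' n p
  have habsorb : ((n : ℚ) + 1) * n.choose p = (n + 1).choose (p + 1) * ((p : ℚ) + 1) := by
    exact_mod_cast Nat.add_one_mul_choose_eq n p
  rw [ncard_opIsometryGraphs (by omega), div_mul_eq_mul_div, eq_div_iff (by positivity)]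
  push_cast
  linear_combination (-((p : ℚ) + 1)) * hpascal - 2 * habsorb

theorem count_order_preserving_partial_isometries_height_p (n p : ℕ) (hp : 2 ≤ p) (hn : p ≤ n) :
    ({G : Finset (ℕ × ℕ) | IsPartialIsometryGraph n G ∧ IsOrderPreservingGraph G ∧
      (G.image Prod.fst).card = p}.ncard : ℚ) =
    ((2 * (n : ℚ) - (p : ℚ) + 1) / ((p : ℚ) + 1)) * (n.choose p : ℚ) :=
  count_order_preserving_partial_isometries_height_p_general n p hp
end

section
/- For n ≥ p ≥ 2, the number of partial isometries of {1,...,n} with domain of size exactly p equals (2(2n − p + 1)/(p + 1)) · C(n, p). -/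
instance (n : ℕ) (G : Finset (ℕ × ℕ)) : Decidable (IsPartialIsometryGraph n G) := by
  unfold IsPartialIsometryGraph; infer_instance

instance (G : Finset (ℕ × ℕ)) : Decidable (IsOrderPreservingGraph G) := by
  unfold IsOrderPreservingGraph; infer_instance

def isoG (n p : ℕ) : Finset (Finset (ℕ × ℕ)) :=
  ((Finset.Icc 1 n ×ˢ Finset.Icc 1 n).powerset).filter
    (fun G => IsPartialIsometryGraph n G ∧ (G.image Prod.fst).card = p)

lemma mem_isoG {n p : ℕ} {G : Finset (ℕ × ℕ)} :
    G ∈ isoG n p ↔ IsPartialIsometryGraph n G ∧ (G.image Prod.fst).card = p := by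
  constructor
  · intro h; exact (Finset.mem_filter.1 h).2
  · intro h; exact Finset.mem_filter.2 ⟨Finset.mem_powerset.2 h.1.1, h⟩

lemma bounds {n : ℕ} {G : Finset (ℕ × ℕ)} (hG : IsPartialIsometryGraph n G)
    {q : ℕ × ℕ} (hq : q ∈ G) : 1 ≤ q.1 ∧ q.1 ≤ n ∧ 1 ≤ q.2 ∧ q.2 ≤ n := by
  have := hG.1 hq
  rw [Finset.mem_product, Finset.mem_Icc, Finset.mem_Icc] at this
  tauto

lemma card_fst {n : ℕ} {G : Finset (ℕ × ℕ)} (hG : IsPartialIsometryGraph n G) :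
    (G.image Prod.fst).card = G.card :=
  Finset.card_image_of_injOn (fun a ha b hb hab => hG.2.1 a ha b hb hab)

lemma card_snd {n : ℕ} {G : Finset (ℕ × ℕ)} (hG : IsPartialIsometryGraph n G) :
    (G.image Prod.snd).card = G.card :=
  Finset.card_image_of_injOn (fun a ha b hb hab => hG.2.2.1 a ha b hb hab)

-- dichotomy
lemma op_or_rev {n : ℕ} {G : Finset (ℕ × ℕ)} (hG : IsPartialIsometryGraph n G) :
    IsOrderPreservingGraph G ∨ (∀ q ∈ G, ∀ r ∈ G, q.1 ≤ r.1 → r.2 ≤ q.2) := by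
  by_contra hc
  push_neg at hc
  have h1 := hc.1; unfold IsOrderPreservingGraph at h1; push_neg at h1
  obtain ⟨q, hq, r, hr, hqr1, hqr2⟩ := h1
  obtain ⟨s, hs, t, ht, hst1, hst2⟩ := hc.2
  -- q.1 ≤ r.1, r.2 < q.2 ; s.1 ≤ t.1, s.2 < t.2
  have hq1r1 : q.1 ≠ r.1 := fun h => by
    have h2 := congrArg Prod.snd (hG.2.1 q hq r hr h); omega
  have hs1t1 : s.1 ≠ t.1 := fun h => by
    have h2 := congrArg Prod.snd (hG.2.1 s hs t ht h); omega
  have d1 := hG.2.2.2 q hq r hr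
  have d2 := hG.2.2.2 q hq s hs
  have d3 := hG.2.2.2 q hq t ht
  have d4 := hG.2.2.2 r hr s hs
  have d5 := hG.2.2.2 r hr t ht
  have d6 := hG.2.2.2 s hs t ht
  omega

lemma nonempty_of_mem {n p : ℕ} {G : Finset (ℕ × ℕ)} (hp : 2 ≤ p) (h : G ∈ isoG n p) :
    G.Nonempty := by
  rcases Finset.eq_empty_or_nonempty G with rfl | h2
  · exfalso; have := (mem_isoG.1 h).2; simp at this; omega
  · exact h2

lemma exists_two {n p : ℕ} {G : Finset (ℕ × ℕ)} (hp : 2 ≤ p) (h : G ∈ isoG n p) :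
    ∃ q ∈ G, ∃ r ∈ G, q.1 ≠ r.1 := by
  obtain ⟨hG, hcard⟩ := mem_isoG.1 h
  have h1 : 1 < (G.image Prod.fst).card := by omega
  obtain ⟨a, ha, b, hb, hab⟩ := Finset.one_lt_card.1 h1
  obtain ⟨q, hq, rfl⟩ := Finset.mem_image.1 ha
  obtain ⟨r, hr, rfl⟩ := Finset.mem_image.1 hb
  exact ⟨q, hq, r, hr, hab⟩

lemma not_op_rev {n p : ℕ} {G : Finset (ℕ × ℕ)} (hp : 2 ≤ p) (h : G ∈ isoG n p)
    (hrev : ∀ q ∈ G, ∀ r ∈ G, q.1 ≤ r.1 → r.2 ≤ q.2) : ¬ IsOrderPreservingGraph G := by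
  intro hop
  obtain ⟨q, hq, r, hr, hqr⟩ := exists_two hp h
  have hG := (mem_isoG.1 h).1
  rcases le_total q.1 r.1 with hle | hle
  · have h1 := hop q hq r hr hle
    have h2 := hrev q hq r hr hle
    have h3 : q.2 = r.2 := le_antisymm h1 h2
    have := hG.2.2.1 q hq r hr h3
    exact hqr (congrArg Prod.fst this)
  · have h1 := hop r hr q hq hle
    have h2 := hrev r hr q hq hle
    have h3 : q.2 = r.2 := le_antisymm h2 h1
    have := hG.2.2.1 q hq r hr h3
    exact hqr (congrArg Prod.fst this)

lemma const_diff {n : ℕ} {G : Finset (ℕ × ℕ)} (hG : IsPartialIsometryGraph n G)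
    (hop : IsOrderPreservingGraph G) :
    ∀ q ∈ G, ∀ r ∈ G, (q.2 : ℤ) - q.1 = (r.2 : ℤ) - r.1 := by
  intro q hq r hr
  have d := hG.2.2.2 q hq r hr
  rcases le_total q.1 r.1 with hle | hle
  · have := hop q hq r hr hle; omega
  · have := hop r hr q hq hle; omega

def refl2 (n : ℕ) (G : Finset (ℕ × ℕ)) : Finset (ℕ × ℕ) :=
  G.image (fun q => (q.1, n + 1 - q.2))

lemma refl2_refl2 {n : ℕ} {G : Finset (ℕ × ℕ)} (hG : IsPartialIsometryGraph n G) :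
    refl2 n (refl2 n G) = G := by
  unfold refl2
  rw [Finset.image_image]
  have : ∀ q ∈ G, ((fun q : ℕ × ℕ => (q.1, n + 1 - q.2)) ∘ fun q : ℕ × ℕ => (q.1, n + 1 - q.2)) q = id q := by
    intro q hq
    have hb := bounds hG hq
    simp only [Function.comp, id]
    have : n + 1 - (n + 1 - q.2) = q.2 := by omega
    rw [this]
  rw [Finset.image_congr this, Finset.image_id]

lemma refl2_iso {n : ℕ} {G : Finset (ℕ × ℕ)} (hG : IsPartialIsometryGraph n G) :
    IsPartialIsometryGraph n (refl2 n G) := by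
  refine ⟨?_, ?_, ?_, ?_⟩
  · intro q hq
    obtain ⟨r, hr, rfl⟩ := Finset.mem_image.1 hq
    have hb := bounds hG hr
    simp only [Finset.mem_product, Finset.mem_Icc]
    constructor <;> omega
  · rintro q hq r hr h
    obtain ⟨a, ha, rfl⟩ := Finset.mem_image.1 hq
    obtain ⟨b, hb, rfl⟩ := Finset.mem_image.1 hr
    simp only at h
    have := hG.2.1 a ha b hb h
    rw [this]
  · rintro q hq r hr h
    obtain ⟨a, ha, rfl⟩ := Finset.mem_image.1 hq
    obtain ⟨b, hb, rfl⟩ := Finset.mem_image.1 hr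
    simp only at h
    have hba := bounds hG ha
    have hbb := bounds hG hb
    have : a.2 = b.2 := by omega
    have := hG.2.2.1 a ha b hb this
    rw [this]
  · rintro q hq r hr
    obtain ⟨a, ha, rfl⟩ := Finset.mem_image.1 hq
    obtain ⟨b, hb, rfl⟩ := Finset.mem_image.1 hr
    have hba := bounds hG ha
    have hbb := bounds hG hb
    have := hG.2.2.2 a ha b hb
    simp only
    omega

lemma refl2_image_fst {n : ℕ} (G : Finset (ℕ × ℕ)) :
    (refl2 n G).image Prod.fst = G.image Prod.fst := by
  unfold refl2
  rw [Finset.image_image]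
  rfl

lemma refl2_mem_isoG {n p : ℕ} {G : Finset (ℕ × ℕ)} (h : G ∈ isoG n p) :
    refl2 n G ∈ isoG n p := by
  obtain ⟨hG, hcard⟩ := mem_isoG.1 h
  exact mem_isoG.2 ⟨refl2_iso hG, by rw [refl2_image_fst]; exact hcard⟩

lemma refl2_op {n : ℕ} {G : Finset (ℕ × ℕ)} (hG : IsPartialIsometryGraph n G)
    (hrev : ∀ q ∈ G, ∀ r ∈ G, q.1 ≤ r.1 → r.2 ≤ q.2) :
    IsOrderPreservingGraph (refl2 n G) := by
  rintro q hq r hr h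
  obtain ⟨a, ha, rfl⟩ := Finset.mem_image.1 hq
  obtain ⟨b, hb, rfl⟩ := Finset.mem_image.1 hr
  simp only at h ⊢
  have := hrev a ha b hb h
  omega

lemma refl2_rev {n : ℕ} {G : Finset (ℕ × ℕ)} (hG : IsPartialIsometryGraph n G)
    (hop : IsOrderPreservingGraph G) :
    ∀ q ∈ refl2 n G, ∀ r ∈ refl2 n G, q.1 ≤ r.1 → r.2 ≤ q.2 := by
  rintro q hq r hr h
  obtain ⟨a, ha, rfl⟩ := Finset.mem_image.1 hq
  obtain ⟨b, hb, rfl⟩ := Finset.mem_image.1 hr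
  simp only at h ⊢
  have := hop a ha b hb h
  have hba := bounds hG ha
  omega

lemma card_isoG_eq_two_mul {n p : ℕ} (hp : 2 ≤ p) :
    (isoG n p).card = 2 * ((isoG n p).filter IsOrderPreservingGraph).card := by
  have hsplit := Finset.card_filter_add_card_filter_not
    (s := isoG n p) (p := IsOrderPreservingGraph)
  have hbij : ((isoG n p).filter (fun G => ¬ IsOrderPreservingGraph G)).card =
      ((isoG n p).filter IsOrderPreservingGraph).card := by
    apply Finset.card_bij (fun G _ => refl2 n G)
    · intro G hG
      obtain ⟨hmem, hnop⟩ := Finset.mem_filter.1 hG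
      have hiso := (mem_isoG.1 hmem).1
      rcases op_or_rev hiso with hop | hrev
      · exact absurd hop hnop
      · exact Finset.mem_filter.2 ⟨refl2_mem_isoG hmem, refl2_op hiso hrev⟩
    · intro G hG G' hG' h
      have h1 := (mem_isoG.1 (Finset.mem_filter.1 hG).1).1
      have h2 := (mem_isoG.1 (Finset.mem_filter.1 hG').1).1
      have := congrArg (refl2 n) h
      rwa [refl2_refl2 h1, refl2_refl2 h2] at this
    · intro H hH
      obtain ⟨hmem, hop⟩ := Finset.mem_filter.1 hH
      have hiso := (mem_isoG.1 hmem).1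
      refine ⟨refl2 n H, Finset.mem_filter.2 ⟨refl2_mem_isoG hmem, ?_⟩, refl2_refl2 hiso⟩
      exact not_op_rev hp (refl2_mem_isoG hmem) (refl2_rev hiso hop)
  omega

lemma trichotomy {n p : ℕ} (hp : 2 ≤ p) {G : Finset (ℕ × ℕ)}
    (h : G ∈ (isoG n p).filter IsOrderPreservingGraph) :
    (∀ q ∈ G, q.2 = q.1) ∨ (∀ q ∈ G, q.1 < q.2) ∨ (∀ q ∈ G, q.2 < q.1) := by
  obtain ⟨hmem, hop⟩ := Finset.mem_filter.1 h
  have hiso := (mem_isoG.1 hmem).1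
  obtain ⟨q0, hq0⟩ := nonempty_of_mem hp hmem
  have hc := const_diff hiso hop
  rcases lt_trichotomy q0.1 q0.2 with h1 | h1 | h1
  · refine Or.inr (Or.inl fun q hq => ?_)
    have := hc q0 hq0 q hq; omega
  · refine Or.inl fun q hq => ?_
    have := hc q0 hq0 q hq; omega
  · refine Or.inr (Or.inr fun q hq => ?_)
    have := hc q0 hq0 q hq; omega

lemma A_card_split {n p : ℕ} (hp : 2 ≤ p) :
    ((isoG n p).filter IsOrderPreservingGraph).card =
      (((isoG n p).filter IsOrderPreservingGraph).filter (fun G => ∀ q ∈ G, q.2 = q.1)).card +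
      (((isoG n p).filter IsOrderPreservingGraph).filter (fun G => ∀ q ∈ G, q.1 < q.2)).card +
      (((isoG n p).filter IsOrderPreservingGraph).filter (fun G => ∀ q ∈ G, q.2 < q.1)).card := by
  set A := (isoG n p).filter IsOrderPreservingGraph with hA
  have h1 := Finset.card_filter_add_card_filter_not
    (s := A) (p := fun G => ∀ q ∈ G, q.2 = q.1)
  have h2 := Finset.card_filter_add_card_filter_not
    (s := A.filter (fun G => ¬ ∀ q ∈ G, q.2 = q.1)) (p := fun G => ∀ q ∈ G, q.1 < q.2)
  have e1 : (A.filter (fun G => ¬ ∀ q ∈ G, q.2 = q.1)).filter (fun G => ∀ q ∈ G, q.1 < q.2)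
      = A.filter (fun G => ∀ q ∈ G, q.1 < q.2) := by
    ext G
    simp only [Finset.mem_filter, and_assoc]
    constructor
    · tauto
    · intro ⟨hGA, hpos⟩
      refine ⟨hGA, fun hall => ?_, hpos⟩
      obtain ⟨q0, hq0⟩ := nonempty_of_mem hp (Finset.mem_filter.1 (hA ▸ hGA : G ∈ (isoG n p).filter IsOrderPreservingGraph)).1
      have := hall q0 hq0; have := hpos q0 hq0; omega
  have e2 : (A.filter (fun G => ¬ ∀ q ∈ G, q.2 = q.1)).filter (fun G => ¬ ∀ q ∈ G, q.1 < q.2)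
      = A.filter (fun G => ∀ q ∈ G, q.2 < q.1) := by
    ext G
    simp only [Finset.mem_filter, and_assoc]
    constructor
    · intro ⟨hGA, h0, hpos⟩
      refine ⟨hGA, ?_⟩
      rcases trichotomy hp (hA ▸ hGA) with h | h | h
      · exact absurd h h0
      · exact absurd h hpos
      · exact h
    · intro ⟨hGA, hneg⟩
      obtain ⟨q0, hq0⟩ := nonempty_of_mem hp (Finset.mem_filter.1 (hA ▸ hGA : G ∈ (isoG n p).filter IsOrderPreservingGraph)).1
      refine ⟨hGA, fun hall => ?_, fun hall => ?_⟩
      · have := hall q0 hq0; have := hneg q0 hq0; omega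
      · have := hall q0 hq0; have := hneg q0 hq0; omega
  rw [e1, e2] at h2
  omega

def swp (G : Finset (ℕ × ℕ)) : Finset (ℕ × ℕ) := G.image (fun q => (q.2, q.1))

lemma swp_swp (G : Finset (ℕ × ℕ)) : swp (swp G) = G := by
  unfold swp
  rw [Finset.image_image]
  have : ((fun q : ℕ × ℕ => (q.2, q.1)) ∘ fun q : ℕ × ℕ => (q.2, q.1)) = id := by
    funext q; rfl
  rw [this, Finset.image_id]

lemma swp_iso {n : ℕ} {G : Finset (ℕ × ℕ)} (hG : IsPartialIsometryGraph n G) :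
    IsPartialIsometryGraph n (swp G) := by
  refine ⟨?_, ?_, ?_, ?_⟩
  · intro q hq
    obtain ⟨r, hr, rfl⟩ := Finset.mem_image.1 hq
    have hb := bounds hG hr
    simp only [Finset.mem_product, Finset.mem_Icc]
    constructor <;> omega
  · rintro q hq r hr h
    obtain ⟨a, ha, rfl⟩ := Finset.mem_image.1 hq
    obtain ⟨b, hb, rfl⟩ := Finset.mem_image.1 hr
    simp only at h
    have := hG.2.2.1 a ha b hb h
    rw [this]
  · rintro q hq r hr h
    obtain ⟨a, ha, rfl⟩ := Finset.mem_image.1 hq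
    obtain ⟨b, hb, rfl⟩ := Finset.mem_image.1 hr
    simp only at h
    have := hG.2.1 a ha b hb h
    rw [this]
  · rintro q hq r hr
    obtain ⟨a, ha, rfl⟩ := Finset.mem_image.1 hq
    obtain ⟨b, hb, rfl⟩ := Finset.mem_image.1 hr
    have := hG.2.2.2 a ha b hb
    simp only
    omega

lemma swp_mem_isoG {n p : ℕ} {G : Finset (ℕ × ℕ)} (h : G ∈ isoG n p) :
    swp G ∈ isoG n p := by
  obtain ⟨hG, hcard⟩ := mem_isoG.1 h
  refine mem_isoG.2 ⟨swp_iso hG, ?_⟩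
  have h1 : (swp G).image Prod.fst = G.image Prod.snd := by
    unfold swp; rw [Finset.image_image]; rfl
  rw [h1, card_snd hG, ← card_fst hG, hcard]

lemma swp_op {n : ℕ} {G : Finset (ℕ × ℕ)} (hG : IsPartialIsometryGraph n G)
    (hop : IsOrderPreservingGraph G) : IsOrderPreservingGraph (swp G) := by
  rintro q hq r hr h
  obtain ⟨a, ha, rfl⟩ := Finset.mem_image.1 hq
  obtain ⟨b, hb, rfl⟩ := Finset.mem_image.1 hr
  simp only at h ⊢
  by_contra hlt
  push_neg at hlt
  have h2 := hop b hb a ha (le_of_lt hlt)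
  have h3 : a.2 = b.2 := le_antisymm h h2
  have := hG.2.2.1 a ha b hb h3
  subst this
  omega

lemma Aneg_card_eq_Apos {n p : ℕ} (hp : 2 ≤ p) :
    (((isoG n p).filter IsOrderPreservingGraph).filter (fun G => ∀ q ∈ G, q.2 < q.1)).card =
    (((isoG n p).filter IsOrderPreservingGraph).filter (fun G => ∀ q ∈ G, q.1 < q.2)).card := by
  apply Finset.card_bij (fun G _ => swp G)
  · intro G hG
    obtain ⟨hGA, hneg⟩ := Finset.mem_filter.1 hG
    obtain ⟨hmem, hop⟩ := Finset.mem_filter.1 hGA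
    have hiso := (mem_isoG.1 hmem).1
    refine Finset.mem_filter.2 ⟨Finset.mem_filter.2 ⟨swp_mem_isoG hmem, swp_op hiso hop⟩, ?_⟩
    rintro q hq
    obtain ⟨a, ha, rfl⟩ := Finset.mem_image.1 hq
    exact hneg a ha
  · intro G hG G' hG' h
    have := congrArg swp h
    rwa [swp_swp, swp_swp] at this
  · intro H hH
    obtain ⟨hHA, hpos⟩ := Finset.mem_filter.1 hH
    obtain ⟨hmem, hop⟩ := Finset.mem_filter.1 hHA
    have hiso := (mem_isoG.1 hmem).1
    refine ⟨swp H, Finset.mem_filter.2 ⟨Finset.mem_filter.2 ⟨swp_mem_isoG hmem, swp_op hiso hop⟩, ?_⟩, swp_swp H⟩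
    rintro q hq
    obtain ⟨a, ha, rfl⟩ := Finset.mem_image.1 hq
    exact hpos a ha

lemma diag_repr {G : Finset (ℕ × ℕ)} (h : ∀ q ∈ G, q.2 = q.1) :
    G = (G.image Prod.fst).image (fun x => (x, x)) := by
  ext q
  simp only [Finset.mem_image, exists_exists_and_eq_and]
  constructor
  · intro hq
    exact ⟨q, hq, by have := h q hq; cases q; simp_all⟩
  · rintro ⟨r, hr, rfl⟩
    have := h r hr; cases r; simp_all

lemma diag_mem {n p : ℕ} {D : Finset ℕ} (hD : D ∈ (Finset.Icc 1 n).powersetCard p) :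
    D.image (fun x => (x, x)) ∈
      ((isoG n p).filter IsOrderPreservingGraph).filter (fun G => ∀ q ∈ G, q.2 = q.1) := by
  obtain ⟨hsub, hcard⟩ := Finset.mem_powersetCard.1 hD
  have himg : (D.image (fun x => (x, x))).image Prod.fst = D := by
    rw [Finset.image_image]; exact Finset.image_id
  refine Finset.mem_filter.2 ⟨Finset.mem_filter.2 ⟨mem_isoG.2 ⟨⟨?_, ?_, ?_, ?_⟩, ?_⟩, ?_⟩, ?_⟩
  · intro q hq
    obtain ⟨x, hx, rfl⟩ := Finset.mem_image.1 hq
    have := Finset.mem_Icc.1 (hsub hx)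
    simp only [Finset.mem_product, Finset.mem_Icc]
    omega
  · rintro q hq r hr h
    obtain ⟨a, _, rfl⟩ := Finset.mem_image.1 hq
    obtain ⟨b, _, rfl⟩ := Finset.mem_image.1 hr
    simp only at h; rw [h]
  · rintro q hq r hr h
    obtain ⟨a, _, rfl⟩ := Finset.mem_image.1 hq
    obtain ⟨b, _, rfl⟩ := Finset.mem_image.1 hr
    simp only at h; rw [h]
  · rintro q hq r hr
    obtain ⟨a, _, rfl⟩ := Finset.mem_image.1 hq
    obtain ⟨b, _, rfl⟩ := Finset.mem_image.1 hr
    simp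
  · rw [himg, hcard]
  · rintro q hq r hr h
    obtain ⟨a, _, rfl⟩ := Finset.mem_image.1 hq
    obtain ⟨b, _, rfl⟩ := Finset.mem_image.1 hr
    simpa using h
  · rintro q hq
    obtain ⟨a, _, rfl⟩ := Finset.mem_image.1 hq
    rfl

lemma A0_card {n p : ℕ} (hp : 2 ≤ p) :
    (((isoG n p).filter IsOrderPreservingGraph).filter (fun G => ∀ q ∈ G, q.2 = q.1)).card =
    n.choose p := by
  have hcard : ((Finset.Icc 1 n).powersetCard p).card = n.choose p := by
    rw [Finset.card_powersetCard, Nat.card_Icc]; simp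
  rw [← hcard]
  apply Finset.card_bij (fun G _ => G.image Prod.fst)
  · intro G hG
    obtain ⟨hGA, h0⟩ := Finset.mem_filter.1 hG
    obtain ⟨hmem, _⟩ := Finset.mem_filter.1 hGA
    obtain ⟨hiso, hcard'⟩ := mem_isoG.1 hmem
    refine Finset.mem_powersetCard.2 ⟨?_, hcard'⟩
    intro x hx
    obtain ⟨q, hq, rfl⟩ := Finset.mem_image.1 hx
    have := bounds hiso hq
    rw [Finset.mem_Icc]; omega
  · intro G hG G' hG' h
    have h0 := (Finset.mem_filter.1 hG).2
    have h0' := (Finset.mem_filter.1 hG').2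
    rw [diag_repr h0, diag_repr h0', h]
  · intro D hD
    refine ⟨D.image (fun x => (x, x)), diag_mem hD, ?_⟩
    rw [Finset.image_image]; exact Finset.image_id

def cOf (G : Finset (ℕ × ℕ)) : ℕ := G.sup (fun q => q.2 - q.1)

lemma pos_struct {n p : ℕ} (hp : 2 ≤ p) {G : Finset (ℕ × ℕ)}
    (h : G ∈ ((isoG n p).filter IsOrderPreservingGraph).filter (fun G => ∀ q ∈ G, q.1 < q.2)) :
    (∀ q ∈ G, q.2 = q.1 + cOf G) ∧ 1 ≤ cOf G ∧ cOf G + 1 ≤ n := by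
  obtain ⟨hGA, hpos⟩ := Finset.mem_filter.1 h
  obtain ⟨hmem, hop⟩ := Finset.mem_filter.1 hGA
  have hiso := (mem_isoG.1 hmem).1
  obtain ⟨q0, hq0⟩ := nonempty_of_mem hp hmem
  have hc := const_diff hiso hop
  have hall : ∀ q ∈ G, q.2 - q.1 = q0.2 - q0.1 := by
    intro q hq
    have := hc q hq q0 hq0
    have := hpos q hq
    have := hpos q0 hq0
    omega
  have hcof : cOf G = q0.2 - q0.1 := by
    refine le_antisymm (Finset.sup_le fun q hq => le_of_eq (hall q hq)) ?_
    exact (hall q0 hq0).symm.le.trans (Finset.le_sup (f := fun q : ℕ × ℕ => q.2 - q.1) hq0)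
  have hb0 := bounds hiso hq0
  have hp0 := hpos q0 hq0
  refine ⟨fun q hq => ?_, by omega, by omega⟩
  have := hall q hq
  have := hpos q hq
  omega

lemma pos_repr {n p : ℕ} (hp : 2 ≤ p) {G : Finset (ℕ × ℕ)}
    (h : G ∈ ((isoG n p).filter IsOrderPreservingGraph).filter (fun G => ∀ q ∈ G, q.1 < q.2)) :
    G = (G.image Prod.fst).image (fun x => (x, x + cOf G)) := by
  have hs := (pos_struct hp h).1
  ext q
  simp only [Finset.mem_image, exists_exists_and_eq_and]
  constructor
  · intro hq
    exact ⟨q, hq, by have := hs q hq; cases q; simp_all⟩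
  · rintro ⟨r, hr, rfl⟩
    have := hs r hr; cases r; simp_all

lemma Apos_card {n p : ℕ} (hp : 2 ≤ p) :
    (((isoG n p).filter IsOrderPreservingGraph).filter (fun G => ∀ q ∈ G, q.1 < q.2)).card =
    n.choose (p + 1) := by
  have hcard : ((Finset.Icc 1 n).powersetCard (p + 1)).card = n.choose (p + 1) := by
    rw [Finset.card_powersetCard, Nat.card_Icc]; simp
  rw [← hcard]
  apply Finset.card_bij (fun G _ => insert (n + 1 - cOf G) (G.image Prod.fst))
  -- membership
  · intro G hG
    obtain ⟨hall, hc1, hc2⟩ := pos_struct hp hG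
    obtain ⟨hGA, hpos⟩ := Finset.mem_filter.1 hG
    obtain ⟨hmem, hop⟩ := Finset.mem_filter.1 hGA
    obtain ⟨hiso, hcardG⟩ := mem_isoG.1 hmem
    have hDsub : ∀ x ∈ G.image Prod.fst, 1 ≤ x ∧ x + cOf G ≤ n := by
      intro x hx
      obtain ⟨q, hq, rfl⟩ := Finset.mem_image.1 hx
      have := bounds hiso hq
      have := hall q hq
      omega
    refine Finset.mem_powersetCard.2 ⟨?_, ?_⟩
    · intro x hx
      rcases Finset.mem_insert.1 hx with rfl | hx'
      · rw [Finset.mem_Icc]; omega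
      · have := hDsub x hx'; rw [Finset.mem_Icc]; omega
    · rw [Finset.card_insert_of_notMem, hcardG]
      intro hmm
      have := hDsub _ hmm
      omega
  -- injectivity
  · intro G hG G' hG' h
    obtain ⟨hall, hc1, hc2⟩ := pos_struct hp hG
    obtain ⟨hall', hc1', hc2'⟩ := pos_struct hp hG'
    have hiso := (mem_isoG.1 (Finset.mem_filter.1 (Finset.mem_filter.1 hG).1).1).1
    have hiso' := (mem_isoG.1 (Finset.mem_filter.1 (Finset.mem_filter.1 hG').1).1).1
    have hDsub : ∀ x ∈ G.image Prod.fst, 1 ≤ x ∧ x + cOf G ≤ n := by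
      intro x hx
      obtain ⟨q, hq, rfl⟩ := Finset.mem_image.1 hx
      have := bounds hiso hq; have := hall q hq; omega
    have hDsub' : ∀ x ∈ G'.image Prod.fst, 1 ≤ x ∧ x + cOf G' ≤ n := by
      intro x hx
      obtain ⟨q, hq, rfl⟩ := Finset.mem_image.1 hx
      have := bounds hiso' hq; have := hall' q hq; omega
    have hceq : cOf G = cOf G' := by
      have h1 : n + 1 - cOf G ∈ insert (n + 1 - cOf G') (G'.image Prod.fst) := by
        rw [← h]; exact Finset.mem_insert_self _ _
      have h2 : n + 1 - cOf G' ∈ insert (n + 1 - cOf G) (G.image Prod.fst) := by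
        rw [h]; exact Finset.mem_insert_self _ _
      rcases Finset.mem_insert.1 h1 with he | hm
      · omega
      · rcases Finset.mem_insert.1 h2 with he | hm'
        · omega
        · have := hDsub' _ hm
          have := hDsub _ hm'
          omega
    have hDeq : G.image Prod.fst = G'.image Prod.fst := by
      ext x
      constructor
      · intro hx
        have hx2 : x ∈ insert (n + 1 - cOf G') (G'.image Prod.fst) := by
          rw [← h]; exact Finset.mem_insert_of_mem hx
        rcases Finset.mem_insert.1 hx2 with rfl | hx' 
        · have := hDsub _ hx; omega
        · exact hx'
      · intro hx
        have hx2 : x ∈ insert (n + 1 - cOf G) (G.image Prod.fst) := by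
          rw [h]; exact Finset.mem_insert_of_mem hx
        rcases Finset.mem_insert.1 hx2 with rfl | hx'
        · have := hDsub' _ hx; omega
        · exact hx'
    rw [pos_repr hp hG, pos_repr hp hG', hDeq, hceq]
  -- surjectivity
  · intro U hU
    obtain ⟨hUsub, hUcard⟩ := Finset.mem_powersetCard.1 hU
    have hUne : U.Nonempty := Finset.card_pos.1 (by omega)
    set m := U.max' hUne with hm
    have hmU : m ∈ U := U.max'_mem hUne
    have hmIcc := Finset.mem_Icc.1 (hUsub hmU)
    set c := n + 1 - m with hcdef
    have hc1 : 1 ≤ c := by omega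
    have herase : ∀ x ∈ U.erase m, 1 ≤ x ∧ x < m ∧ x ≤ n := by
      intro x hx
      have hxne := Finset.ne_of_mem_erase hx
      have hxU := Finset.mem_of_mem_erase hx
      have := Finset.mem_Icc.1 (hUsub hxU)
      have := U.le_max' x hxU
      omega
    have hEne : (U.erase m).Nonempty := by
      refine Finset.card_pos.1 ?_
      rw [Finset.card_erase_of_mem hmU, hUcard]
      omega
    refine ⟨(U.erase m).image (fun x => (x, x + c)), ?_, ?_⟩
    · have himgfst : ((U.erase m).image (fun x => (x, x + c))).image Prod.fst = U.erase m := by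
        rw [Finset.image_image]; exact Finset.image_id
      refine Finset.mem_filter.2 ⟨Finset.mem_filter.2 ⟨mem_isoG.2 ⟨⟨?_, ?_, ?_, ?_⟩, ?_⟩, ?_⟩, ?_⟩
      · intro q hq
        obtain ⟨x, hx, rfl⟩ := Finset.mem_image.1 hq
        have := herase x hx
        simp only [Finset.mem_product, Finset.mem_Icc]
        omega
      · rintro q hq r hr hh
        obtain ⟨a, _, rfl⟩ := Finset.mem_image.1 hq
        obtain ⟨b, _, rfl⟩ := Finset.mem_image.1 hr
        simp only at hh; simp [hh]
      · rintro q hq r hr hh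
        obtain ⟨a, _, rfl⟩ := Finset.mem_image.1 hq
        obtain ⟨b, _, rfl⟩ := Finset.mem_image.1 hr
        simp only at hh
        have : a = b := by omega
        simp [this]
      · rintro q hq r hr
        obtain ⟨a, _, rfl⟩ := Finset.mem_image.1 hq
        obtain ⟨b, _, rfl⟩ := Finset.mem_image.1 hr
        simp only
        omega
      · rw [himgfst, Finset.card_erase_of_mem hmU, hUcard]; omega
      · rintro q hq r hr hh
        obtain ⟨a, _, rfl⟩ := Finset.mem_image.1 hq
        obtain ⟨b, _, rfl⟩ := Finset.mem_image.1 hr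
        simp only at hh ⊢
        omega
      · rintro q hq
        obtain ⟨a, _, rfl⟩ := Finset.mem_image.1 hq
        simp only
        omega
    · have hcof : cOf ((U.erase m).image (fun x => (x, x + c))) = c := by
        unfold cOf
        rw [Finset.sup_image]
        refine le_antisymm (Finset.sup_le fun x hx => ?_) ?_
        · simp only [Function.comp]; omega
        · obtain ⟨x, hx⟩ := hEne
          have := Finset.le_sup (f := (fun q : ℕ × ℕ => q.2 - q.1) ∘ fun x => (x, x + c)) hx
          simpa using this
      rw [hcof]
      have himgfst : ((U.erase m).image (fun x => (x, x + c))).image Prod.fst = U.erase m := by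
        rw [Finset.image_image]; exact Finset.image_id
      rw [himgfst]
      have : n + 1 - c = m := by omega
      rw [this, Finset.insert_erase hmU]

lemma isoG_card {n p : ℕ} (hp : 2 ≤ p) :
    (isoG n p).card = 2 * n.choose p + 4 * n.choose (p + 1) := by
  have h1 := card_isoG_eq_two_mul (n := n) (p := p) hp
  have h2 := A_card_split (n := n) (p := p) hp
  have h3 := A0_card (n := n) (p := p) hp
  have h4 := Apos_card (n := n) (p := p) hp
  have h5 := Aneg_card_eq_Apos (n := n) (p := p) hp
  omega

theorem count_partial_isometries_height_p (n p : ℕ) (hp : 2 ≤ p) (hn : p ≤ n) :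
    ({G : Finset (ℕ × ℕ) | IsPartialIsometryGraph n G ∧
      (G.image Prod.fst).card = p}.ncard : ℚ) =
    (2 * (2 * (n : ℚ) - (p : ℚ) + 1) / ((p : ℚ) + 1)) * (n.choose p : ℚ) := by
  have hset : {G : Finset (ℕ × ℕ) | IsPartialIsometryGraph n G ∧
      (G.image Prod.fst).card = p} = ↑(isoG n p) := by
    ext G
    simp only [Set.mem_setOf_eq, Finset.coe_filter, Finset.mem_coe]
    exact mem_isoG.symm
  rw [hset, Set.ncard_coe_finset, isoG_card hp]
  have hC1 : (n.choose (p + 1) : ℚ) * ((p : ℚ) + 1) = (n.choose p : ℚ) * ((n : ℚ) - p) := by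
    have h := Nat.choose_succ_right_eq n p
    have hcast := congrArg (fun x : ℕ => (x : ℚ)) h
    simp only [Nat.cast_mul, Nat.cast_add, Nat.cast_one, Nat.cast_sub hn] at hcast
    linarith [hcast]
  have hne : (p : ℚ) + 1 ≠ 0 := by positivity
  rw [div_mul_eq_mul_div, eq_div_iff hne]
  push_cast
  linear_combination 4 * hC1
end

section
/- The total number of order-preserving partial isometries of the chain {1,...,n} (including the empty map) equals 3·2^n − 2(n + 1). -/
open Finset

namespace OPPIAux

def phi (b : Bool) (d : ℕ) (S : Finset ℕ) : Finset (ℕ × ℕ) :=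
  S.image (fun x => if b then (x, x + d) else (x + d, x))

lemma mem_phi {b : Bool} {d : ℕ} {S : Finset ℕ} {p : ℕ × ℕ} :
    p ∈ phi b d S ↔ ∃ x ∈ S, (if b then (x, x + d) else (x + d, x)) = p := by
  simp [phi]

lemma phi_valid {n : ℕ} {b : Bool} {d : ℕ} {S : Finset ℕ}
    (hS : S ⊆ Finset.Icc 1 (n - d)) :
    IsPartialIsometryGraph n (phi b d S) ∧ IsOrderPreservingGraph (phi b d S) := by
  have hmem : ∀ x ∈ S, 1 ≤ x ∧ x + d ≤ n := by
    intro x hx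
    have := hS hx
    simp only [Finset.mem_Icc] at this
    omega
  refine ⟨⟨?_, ?_, ?_, ?_⟩, ?_⟩
  · intro p hp
    obtain ⟨x, hx, rfl⟩ := mem_phi.mp hp
    have := hmem x hx
    cases b <;> simp [Finset.mem_Icc] <;> omega
  · intro p hp q hq h
    obtain ⟨x, hx, rfl⟩ := mem_phi.mp hp
    obtain ⟨y, hy, rfl⟩ := mem_phi.mp hq
    cases b <;> simp_all
  · intro p hp q hq h
    obtain ⟨x, hx, rfl⟩ := mem_phi.mp hp
    obtain ⟨y, hy, rfl⟩ := mem_phi.mp hq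
    cases b <;> simp_all
  · intro p hp q hq
    obtain ⟨x, hx, rfl⟩ := mem_phi.mp hp
    obtain ⟨y, hy, rfl⟩ := mem_phi.mp hq
    cases b <;> simp <;> omega
  · intro p hp q hq h
    obtain ⟨x, hx, rfl⟩ := mem_phi.mp hp
    obtain ⟨y, hy, rfl⟩ := mem_phi.mp hq
    cases b <;> simp_all

lemma shift_eq {n : ℕ} {G : Finset (ℕ × ℕ)} (h : IsPartialIsometryGraph n G)
    (hord : IsOrderPreservingGraph G) {p q : ℕ × ℕ} (hp : p ∈ G) (hq : q ∈ G) :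
    (p.2 : ℤ) - p.1 = (q.2 : ℤ) - q.1 := by
  obtain ⟨-, -, -, hdist⟩ := h
  have h1 := hdist p hp q hq
  rcases le_total p.1 q.1 with h' | h'
  · have := hord p hp q hq h'; omega
  · have := hord q hq p hp h'; omega

lemma decomp {n : ℕ} {G : Finset (ℕ × ℕ)} (h1 : IsPartialIsometryGraph n G)
    (h2 : IsOrderPreservingGraph G) (hne : G.Nonempty) :
    ∃ b d S, (b = true ∨ 1 ≤ d) ∧ S ⊆ Finset.Icc 1 (n - d) ∧ S.Nonempty ∧ G = phi b d S := by
  obtain ⟨p₀, hp₀⟩ := hne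
  have hsq := h1.1
  rcases le_or_gt p₀.1 p₀.2 with hle | hlt
  · refine ⟨true, p₀.2 - p₀.1, G.image Prod.fst, Or.inl rfl, ?_, ?_, ?_⟩
    · intro x hx
      obtain ⟨q, hq, rfl⟩ := Finset.mem_image.mp hx
      have hs := shift_eq h1 h2 hq hp₀
      have hq' := hsq hq
      simp only [Finset.mem_product, Finset.mem_Icc] at hq' ⊢
      omega
    · exact ⟨p₀.1, Finset.mem_image.mpr ⟨p₀, hp₀, rfl⟩⟩
    · ext p
      rw [mem_phi]
      constructor
      · intro hp
        have hs := shift_eq h1 h2 hp hp₀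
        refine ⟨p.1, Finset.mem_image.mpr ⟨p, hp, rfl⟩, ?_⟩
        simp only [if_true]
        have : p.2 = p.1 + (p₀.2 - p₀.1) := by omega
        exact Prod.ext rfl this.symm
      · rintro ⟨x, hx, rfl⟩
        obtain ⟨q, hq, rfl⟩ := Finset.mem_image.mp hx
        have hs := shift_eq h1 h2 hq hp₀
        have : (if true then (q.1, q.1 + (p₀.2 - p₀.1)) else (q.1 + (p₀.2 - p₀.1), q.1)) = q := by
          simp only [if_true]
          refine Prod.ext rfl ?_
          omega
        rw [this]; exact hq
  · refine ⟨false, p₀.1 - p₀.2, G.image Prod.snd, Or.inr (by omega), ?_, ?_, ?_⟩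
    · intro x hx
      obtain ⟨q, hq, rfl⟩ := Finset.mem_image.mp hx
      have hs := shift_eq h1 h2 hq hp₀
      have hq' := hsq hq
      simp only [Finset.mem_product, Finset.mem_Icc] at hq' ⊢
      omega
    · exact ⟨p₀.2, Finset.mem_image.mpr ⟨p₀, hp₀, rfl⟩⟩
    · ext p
      rw [mem_phi]
      constructor
      · intro hp
        have hs := shift_eq h1 h2 hp hp₀
        refine ⟨p.2, Finset.mem_image.mpr ⟨p, hp, rfl⟩, ?_⟩
        simp only [Bool.false_eq_true, if_false]
        have : p.1 = p.2 + (p₀.1 - p₀.2) := by omega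
        exact Prod.ext this.symm rfl
      · rintro ⟨x, hx, rfl⟩
        obtain ⟨q, hq, rfl⟩ := Finset.mem_image.mp hx
        have hs := shift_eq h1 h2 hq hp₀
        have : (if false then (q.2, q.2 + (p₀.1 - p₀.2)) else (q.2 + (p₀.1 - p₀.2), q.2)) = q := by
          simp only [Bool.false_eq_true, if_false]
          refine Prod.ext ?_ rfl
          omega
        rw [this]; exact hq

lemma fst_phi_true (d : ℕ) (S : Finset ℕ) : (phi true d S).image Prod.fst = S := by
  rw [phi, Finset.image_image]
  simp [Function.comp_def]

lemma snd_phi_false (d : ℕ) (S : Finset ℕ) : (phi false d S).image Prod.snd = S := by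
  rw [phi, Finset.image_image]
  simp [Function.comp_def]

lemma sumA (n : ℕ) : ∑ d ∈ range n, (2 ^ (n - d) - 1) = ∑ d ∈ range n, (2 ^ (d + 1) - 1) := by
  rw [← Finset.sum_range_reflect (fun d => 2 ^ (d + 1) - 1) n]
  refine Finset.sum_congr rfl fun j hj => ?_
  rw [Finset.mem_range] at hj
  congr 2
  omega

lemma sumB (n : ℕ) : ∑ d ∈ range n, (2 ^ (d + 1) - 1) + (n + 2) = 2 ^ (n + 1) := by
  induction n with
  | zero => simp
  | succ n ih =>
    rw [Finset.sum_range_succ]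
    have h2 : (2 : ℕ) ^ (n + 2) = 2 * 2 ^ (n + 1) := by ring
    have h3 : 1 ≤ (2 : ℕ) ^ (n + 1) := Nat.one_le_two_pow
    omega

lemma sumC (m : ℕ) : ∑ d ∈ Icc 1 m, (2 ^ (m + 1 - d) - 1) = ∑ d ∈ range m, (2 ^ (d + 1) - 1) := by
  rw [← sumA m]
  refine Finset.sum_nbij' (fun d => d - 1) (fun j => j + 1) ?_ ?_ ?_ ?_ ?_ <;>
    intro a ha <;> simp [Finset.mem_Icc, Finset.mem_range] at ha ⊢ <;>
    first | omega | (congr 2; omega)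

def Qp (n : ℕ) : Finset ((_ : ℕ) × Finset ℕ) :=
  (range n).sigma (fun d => (Finset.Icc 1 (n - d)).powerset.erase ∅)

def Qm (n : ℕ) : Finset ((_ : ℕ) × Finset ℕ) :=
  (Finset.Icc 1 (n - 1)).sigma (fun d => (Finset.Icc 1 (n - d)).powerset.erase ∅)

end OPPIAux

open OPPIAux

theorem card_order_preserving_partial_isometries (n : ℕ) :
    {G : Finset (ℕ × ℕ) | IsPartialIsometryGraph n G ∧ IsOrderPreservingGraph G}.ncard =
    3 * 2 ^ n - 2 * (n + 1) := by
  classical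
  set A := (Qp n).image (fun t => phi true t.1 t.2) with hA
  set B := (Qm n).image (fun t => phi false t.1 t.2) with hB
  -- the set equals an explicit finset
  have hset : {G : Finset (ℕ × ℕ) | IsPartialIsometryGraph n G ∧ IsOrderPreservingGraph G} =
      ↑(insert ∅ (A ∪ B)) := by
    ext G
    simp only [Set.mem_setOf_eq, Finset.coe_insert, Set.mem_insert_iff, Finset.coe_union,
      Set.mem_union, Finset.mem_coe]
    constructor
    · rintro ⟨h1, h2⟩
      rcases G.eq_empty_or_nonempty with rfl | hne
      · exact Or.inl rfl
      right
      obtain ⟨b, d, S, hb, hsub, hSne, rfl⟩ := decomp h1 h2 hne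
      obtain ⟨x, hx⟩ := hSne
      have hxI := hsub hx
      rw [Finset.mem_Icc] at hxI
      cases b with
      | true =>
        left
        refine Finset.mem_image.mpr ⟨⟨d, S⟩, ?_, rfl⟩
        simp only [Qp, Finset.mem_sigma, Finset.mem_range, Finset.mem_erase,
          Finset.mem_powerset]
        exact ⟨by omega, fun h => by simp [h] at hx, hsub⟩
      | false =>
        right
        refine Finset.mem_image.mpr ⟨⟨d, S⟩, ?_, rfl⟩
        simp only [Qm, Finset.mem_sigma, Finset.mem_Icc, Finset.mem_erase,
          Finset.mem_powerset]
        have hd : 1 ≤ d := by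
          rcases hb with h | h
          · exact absurd h (by simp)
          · exact h
        exact ⟨⟨hd, by omega⟩, fun h => by simp [h] at hx, hsub⟩
    · rintro (rfl | h | h)
      · refine ⟨⟨?_, ?_, ?_, ?_⟩, ?_⟩ <;> simp [IsOrderPreservingGraph]
      · obtain ⟨⟨d, S⟩, ht, rfl⟩ := Finset.mem_image.mp h
        simp only [Qp, Finset.mem_sigma, Finset.mem_erase, Finset.mem_powerset] at ht
        exact phi_valid ht.2.2
      · obtain ⟨⟨d, S⟩, ht, rfl⟩ := Finset.mem_image.mp h
        simp only [Qm, Finset.mem_sigma, Finset.mem_erase, Finset.mem_powerset] at ht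
        exact phi_valid ht.2.2
  rw [hset, Set.ncard_coe_finset]
  -- nonemptiness facts for members of Qp/Qm
  have hQpne : ∀ (d : ℕ) (S : Finset ℕ), (⟨d, S⟩ : (_ : ℕ) × Finset ℕ) ∈ Qp n → S ≠ ∅ := by
    intro d S ht
    simp only [Qp, Finset.mem_sigma, Finset.mem_erase] at ht
    exact ht.2.1
  have hQmne : ∀ (d : ℕ) (S : Finset ℕ), (⟨d, S⟩ : (_ : ℕ) × Finset ℕ) ∈ Qm n →
      S ≠ ∅ ∧ 1 ≤ d := by
    intro d S ht
    simp only [Qm, Finset.mem_sigma, Finset.mem_erase, Finset.mem_Icc] at ht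
    exact ⟨ht.2.1, ht.1.1⟩
  -- ∅ is not an image
  have hempty : ∅ ∉ A ∪ B := by
    rw [Finset.mem_union]
    rintro (h | h) <;> obtain ⟨⟨d, S⟩, ht, heq⟩ := Finset.mem_image.mp h <;>
      dsimp only at heq
    · exact hQpne d S ht (Finset.image_eq_empty.mp heq)
    · exact (hQmne d S ht).1 (Finset.image_eq_empty.mp heq)
  -- disjointness of A and B
  have hAB : Disjoint A B := by
    rw [Finset.disjoint_left]
    intro G hGA hGB
    obtain ⟨⟨d, S⟩, ht, heq⟩ := Finset.mem_image.mp hGA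
    obtain ⟨⟨d', S'⟩, ht', heq'⟩ := Finset.mem_image.mp hGB
    dsimp only at heq heq'
    have hSne : S ≠ ∅ := hQpne d S ht
    obtain ⟨x, hx⟩ := Finset.nonempty_iff_ne_empty.mpr hSne
    have hmem : (x, x + d) ∈ phi true d S := mem_phi.mpr ⟨x, hx, by simp⟩
    rw [heq, ← heq'] at hmem
    obtain ⟨y, hy, hyx⟩ := mem_phi.mp hmem
    simp only [Bool.false_eq_true, if_false, Prod.mk.injEq] at hyx
    have := (hQmne d' S' ht').2
    omega
  rw [Finset.card_insert_of_notMem hempty, Finset.card_union_of_disjoint hAB]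
  -- injectivity on Qp
  have hinjA : Set.InjOn (fun t : (_ : ℕ) × Finset ℕ => phi true t.1 t.2) ↑(Qp n) := by
    rintro ⟨d, S⟩ ht ⟨d', S'⟩ ht' h
    dsimp only at h
    have hS : S = S' := by rw [← fst_phi_true d S, h, fst_phi_true]
    subst hS
    have hSne : S ≠ ∅ := hQpne d S ht
    obtain ⟨x, hx⟩ := Finset.nonempty_iff_ne_empty.mpr hSne
    have hmem : (x, x + d) ∈ phi true d S := mem_phi.mpr ⟨x, hx, by simp⟩
    rw [h] at hmem
    obtain ⟨y, hy, hyx⟩ := mem_phi.mp hmem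
    simp only [if_true, Prod.mk.injEq] at hyx
    have : d = d' := by omega
    subst this
    rfl
  have hinjB : Set.InjOn (fun t : (_ : ℕ) × Finset ℕ => phi false t.1 t.2) ↑(Qm n) := by
    rintro ⟨d, S⟩ ht ⟨d', S'⟩ ht' h
    dsimp only at h
    have hS : S = S' := by rw [← snd_phi_false d S, h, snd_phi_false]
    subst hS
    have hSne : S ≠ ∅ := (hQmne d S ht).1
    obtain ⟨x, hx⟩ := Finset.nonempty_iff_ne_empty.mpr hSne
    have hmem : (x + d, x) ∈ phi false d S := mem_phi.mpr ⟨x, hx, by simp⟩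
    rw [h] at hmem
    obtain ⟨y, hy, hyx⟩ := mem_phi.mp hmem
    simp only [Bool.false_eq_true, if_false, Prod.mk.injEq] at hyx
    have : d = d' := by omega
    subst this
    rfl
  have hcard : ∀ d : ℕ, ((Finset.Icc 1 (n - d)).powerset.erase ∅).card = 2 ^ (n - d) - 1 := by
    intro d
    rw [Finset.card_erase_of_mem (Finset.empty_mem_powerset _), Finset.card_powerset, Nat.card_Icc]
    simp
  have hcardA : A.card = ∑ d ∈ range n, (2 ^ (n - d) - 1) := by
    rw [hA, Finset.card_image_of_injOn hinjA, Qp, Finset.card_sigma]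
    exact Finset.sum_congr rfl fun d _ => hcard d
  have hcardB : B.card = ∑ d ∈ Finset.Icc 1 (n - 1), (2 ^ (n - d) - 1) := by
    rw [hB, Finset.card_image_of_injOn hinjB, Qm, Finset.card_sigma]
    exact Finset.sum_congr rfl fun d _ => hcard d
  rw [hcardA, hcardB]
  cases n with
  | zero => simp
  | succ m =>
    rw [sumA]
    have hC : ∑ d ∈ Finset.Icc 1 (m + 1 - 1), (2 ^ (m + 1 - d) - 1) =
        ∑ d ∈ range m, (2 ^ (d + 1) - 1) := by
      simpa using sumC m
    rw [hC]
    have h1 := sumB (m + 1)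
    have h2 := sumB m
    have h3 : (2 : ℕ) ^ (m + 2) = 2 * 2 ^ (m + 1) := by ring
    have h4 : 1 ≤ (2 : ℕ) ^ (m + 1) := Nat.one_le_two_pow
    omega
end

section
/- The total number of partial isometries of the chain {1,...,n} (including the empty map) equals 3·2^{n+1} − (n + 2)^2 − 1. -/
open Finset

namespace Finset

variable {α : Type*} (s : Finset α)

lemma card_powerset_filter_card_le_one : (s.powerset.filter (·.card ≤ 1)).card = s.card + 1 := by
  classical
  have h : s.powerset.filter (·.card ≤ 1) = s.powersetCard 0 ∪ s.powersetCard 1 := by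
    ext t
    simp only [mem_filter, mem_powerset, mem_union, mem_powersetCard, ← and_or_left]
    exact and_congr_right fun _ => by omega
  rw [h, card_union_of_disjoint, card_powersetCard, card_powersetCard, Nat.choose_zero_right,
    Nat.choose_one_right, add_comm]
  exact disjoint_left.2 fun t h0 h1 => by
    rw [mem_powersetCard] at h0 h1
    omega

lemma card_powerset_filter_two_le_card :
    (s.powerset.filter (2 ≤ ·.card)).card = 2 ^ s.card - s.card - 1 := by
  have h := card_filter_add_card_filter_not (s := s.powerset) (p := (·.card ≤ 1))
  have htwo : s.powerset.filter (fun t => ¬t.card ≤ 1) = s.powerset.filter (2 ≤ ·.card) :=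
    filter_congr fun t _ => by omega
  rw [htwo, card_powerset_filter_card_le_one, card_powerset] at h
  omega

end Finset

lemma Int.sum_Icc_neg_sub_natAbs {M : Type*} [AddCommMonoid M] (n : ℕ) (g : ℕ → M) :
    ∑ d ∈ Icc (-n : ℤ) n, g (n - d.natAbs) = g n + 2 • ∑ j ∈ Finset.range n, g j := by
  induction n generalizing g with
  | zero => simp
  | succ n ih =>
    have hIcc : Icc (-(n + 1 : ℕ) : ℤ) (n + 1 : ℕ) =
        insert (-(n + 1 : ℕ) : ℤ) (insert ((n + 1 : ℕ) : ℤ) (Icc (-n : ℤ) n)) := by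
      ext d
      simp only [mem_Icc, mem_insert]
      omega
    rw [hIcc, sum_insert (by simp only [mem_insert, mem_Icc]; omega),
      sum_insert (by simp only [mem_Icc]; omega),
      sum_congr rfl fun d hd => congrArg g (by rw [mem_Icc] at hd; omega :
        n + 1 - d.natAbs = (n - d.natAbs) + 1),
      ih fun j => g (j + 1), sum_range_succ' g, smul_add]
    simp only [Int.natAbs_neg, Int.natAbs_natCast, Nat.sub_self]
    abel

lemma Nat.two_mul_sum_range_two_pow_sub (n : ℕ) :
    2 * ∑ j ∈ range n, (2 ^ j - j - 1) + n * (n + 1) + 2 = 2 ^ (n + 1) := by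
  induction n with
  | zero => simp
  | succ n ih =>
    have := Nat.lt_two_pow_self (n := n)
    have hsq : (n + 1) * (n + 1 + 1) = n * (n + 1) + 2 * (n + 1) := by ring
    rw [pow_succ] at ih
    rw [sum_range_succ, pow_succ 2 (n + 1)]
    omega

namespace PartialIsometry

open scoped Classical

def box (n : ℕ) : Finset (ℕ × ℕ) := Icc 1 n ×ˢ Icc 1 n

def HasConstDiff (G : Finset (ℕ × ℕ)) : Prop :=
  ∀ p ∈ G, ∀ q ∈ G, (p.2 : ℤ) - p.1 = q.2 - q.1

def HasConstSum (G : Finset (ℕ × ℕ)) : Prop :=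
  ∀ p ∈ G, ∀ q ∈ G, p.1 + p.2 = q.1 + q.2

lemma mem_box {n : ℕ} {p : ℕ × ℕ} :
    p ∈ box n ↔ 1 ≤ p.1 ∧ p.1 ≤ n ∧ 1 ≤ p.2 ∧ p.2 ≤ n := by
  simp only [box, mem_product, mem_Icc, and_assoc]

lemma hasConstDiff_or_hasConstSum {G : Finset (ℕ × ℕ)}
    (hG : ∀ p ∈ G, ∀ q ∈ G, ((p.1 : ℤ) - q.1).natAbs = ((p.2 : ℤ) - q.2).natAbs) :
    HasConstDiff G ∨ HasConstSum G := by
  -- Two points `a`, `b` with different differences have equal sums, and then every point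
  -- isometric to both has that sum too.
  refine or_iff_not_imp_left.2 fun hdiff p hp q hq => ?_
  obtain ⟨a, ha, b, hb, hab⟩ : ∃ a ∈ G, ∃ b ∈ G, (a.2 : ℤ) - a.1 ≠ b.2 - b.1 := by
    simpa [HasConstDiff] using hdiff
  have := hG p hp a ha
  have := hG p hp b hb
  have := hG q hq a ha
  have := hG q hq b hb
  have := hG a ha b hb
  omega

theorem isPartialIsometryGraph_iff {n : ℕ} {G : Finset (ℕ × ℕ)} :
    IsPartialIsometryGraph n G ↔ G ⊆ box n ∧ (HasConstDiff G ∨ HasConstSum G) := by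
  constructor
  · rintro ⟨hbox, -, -, hdist⟩
    exact ⟨hbox, hasConstDiff_or_hasConstSum hdist⟩
  · rintro ⟨hbox, hdiff | hsum⟩
    · refine ⟨hbox, fun p hp q hq h => ?_, fun p hp q hq h => ?_, fun p hp q hq => ?_⟩ <;>
        have := hdiff p hp q hq <;> first | omega | exact Prod.ext (by omega) (by omega)
    · refine ⟨hbox, fun p hp q hq h => ?_, fun p hp q hq h => ?_, fun p hp q hq => ?_⟩ <;>
        have := hsum p hp q hq <;> first | omega | exact Prod.ext (by omega) (by omega)

lemma card_le_one_of_hasConstDiff_of_hasConstSum {G : Finset (ℕ × ℕ)} (hdiff : HasConstDiff G)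
    (hsum : HasConstSum G) : G.card ≤ 1 :=
  card_le_one.2 fun p hp q hq => by
    have := hdiff p hp q hq
    have := hsum p hp q hq
    exact Prod.ext (by omega) (by omega)

def reflect (n : ℕ) (p : ℕ × ℕ) : ℕ × ℕ := (p.1, n + 1 - p.2)

section reflect

variable {n : ℕ} {G : Finset (ℕ × ℕ)}

lemma reflect_reflect {p : ℕ × ℕ} (hp : p ∈ box n) : reflect n (reflect n p) = p := by
  rw [mem_box] at hp
  exact Prod.ext rfl (by simp only [reflect]; omega)

lemma image_reflect_subset_box (hG : G ⊆ box n) : G.image (reflect n) ⊆ box n := by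
  simp only [image_subset_iff, mem_box]
  intro p hp
  have := mem_box.1 (hG hp)
  simp only [reflect]
  omega

lemma image_reflect_image_reflect (hG : G ⊆ box n) :
    (G.image (reflect n)).image (reflect n) = G := by
  rw [image_image]
  exact (image_congr fun p hp => reflect_reflect (hG hp)).trans image_id'

lemma card_image_reflect (hG : G ⊆ box n) : (G.image (reflect n)).card = G.card :=
  card_image_of_injOn fun p hp q hq h => by
    simpa only [reflect_reflect (hG hp), reflect_reflect (hG hq)] using congrArg (reflect n) h

lemma hasConstSum_image_reflect (hG : G ⊆ box n) (h : HasConstDiff G) :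
    HasConstSum (G.image (reflect n)) := by
  simp only [HasConstSum, mem_image]
  rintro _ ⟨p, hp, rfl⟩ _ ⟨q, hq, rfl⟩
  have := h p hp q hq
  have := mem_box.1 (hG hp)
  have := mem_box.1 (hG hq)
  simp only [reflect]
  omega

lemma hasConstDiff_image_reflect (hG : G ⊆ box n) (h : HasConstSum G) :
    HasConstDiff (G.image (reflect n)) := by
  simp only [HasConstDiff, mem_image]
  rintro _ ⟨p, hp, rfl⟩ _ ⟨q, hq, rfl⟩
  have := h p hp q hq
  have := mem_box.1 (hG hp)
  have := mem_box.1 (hG hq)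
  simp only [reflect]
  omega

end reflect

lemma card_filter_hasConstSum_eq_card_filter_hasConstDiff (n : ℕ) :
    ((box n).powerset.filter fun G => 2 ≤ G.card ∧ HasConstSum G).card =
      ((box n).powerset.filter fun G => 2 ≤ G.card ∧ HasConstDiff G).card := by
  refine card_nbij' (image (reflect n)) (image (reflect n)) ?_ ?_ ?_ ?_ <;>
    intro G hG <;> simp only [mem_coe, mem_filter, mem_powerset] at hG ⊢
  · exact ⟨image_reflect_subset_box hG.1, by rw [card_image_reflect hG.1]; exact hG.2.1,
      hasConstDiff_image_reflect hG.1 hG.2.2⟩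
  · exact ⟨image_reflect_subset_box hG.1, by rw [card_image_reflect hG.1]; exact hG.2.1,
      hasConstSum_image_reflect hG.1 hG.2.2⟩
  · exact image_reflect_image_reflect hG.1
  · exact image_reflect_image_reflect hG.1

lemma card_filter_isPartialIsometryGraph (n : ℕ) :
    ((box n).powerset.filter (IsPartialIsometryGraph n)).card =
      ((box n).powerset.filter (·.card ≤ 1)).card +
      ((box n).powerset.filter fun G => 2 ≤ G.card ∧ HasConstDiff G).card +
      ((box n).powerset.filter fun G => 2 ≤ G.card ∧ HasConstSum G).card := by
  have hsplit : (box n).powerset.filter (IsPartialIsometryGraph n) =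
      (box n).powerset.filter (·.card ≤ 1) ∪
      (box n).powerset.filter (fun G => 2 ≤ G.card ∧ HasConstDiff G) ∪
      (box n).powerset.filter (fun G => 2 ≤ G.card ∧ HasConstSum G) := by
    rw [← filter_or, ← filter_or]
    refine filter_congr fun G hG => ?_
    rw [isPartialIsometryGraph_iff, ← mem_powerset]
    by_cases hcard : G.card ≤ 1
    · simp only [hG, hcard, true_and, true_or, iff_true]
      exact .inl fun p hp q hq => by rw [card_le_one.1 hcard p hp q hq]
    · have htwo : 2 ≤ G.card := by omega
      simp only [hG, hcard, htwo, true_and, false_or]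
  rw [hsplit, card_union_of_disjoint, card_union_of_disjoint]
  · exact disjoint_filter.2 fun G _ h1 h2 => by omega
  · refine disjoint_union_left.2 ⟨disjoint_filter.2 fun G _ h1 h2 => by omega,
      disjoint_filter.2 fun G _ h1 h2 => ?_⟩
    have := card_le_one_of_hasConstDiff_of_hasConstSum h1.2 h2.2
    omega

def diagLine (n : ℕ) (d : ℤ) : Finset (ℕ × ℕ) :=
  (box n).filter fun p => (p.2 : ℤ) - p.1 = d

lemma card_diagLine (n : ℕ) (d : ℤ) : (diagLine n d).card = n - d.natAbs := by
  have hproj : (diagLine n d).card = (Icc (max 1 (1 - d)) (min n (n - d))).card := by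
    refine card_nbij' (fun p => (p.1 : ℤ)) (fun x => (x.toNat, (x + d).toNat)) ?_ ?_ ?_ ?_ <;>
      intro p hp <;> simp only [diagLine, mem_coe, mem_filter, mem_box, mem_Icc] at hp ⊢
    · omega
    · omega
    · exact Prod.ext (by simp) (by simp only; omega)
    · omega
  rw [hproj, Int.card_Icc]
  omega

lemma filter_hasConstDiff_eq_biUnion (n : ℕ) :
    (box n).powerset.filter (fun G => 2 ≤ G.card ∧ HasConstDiff G) =
      (Icc (-n : ℤ) n).biUnion fun d => (diagLine n d).powerset.filter (2 ≤ ·.card) := by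
  ext G
  simp only [mem_filter, mem_powerset, mem_biUnion, mem_Icc, diagLine, subset_iff]
  constructor
  · rintro ⟨hbox, hcard, hdiff⟩
    obtain ⟨p, hp⟩ := card_pos.1 (by omega : 0 < G.card)
    have := mem_box.1 (hbox hp)
    exact ⟨(p.2 : ℤ) - p.1, by omega, fun q hq => ⟨hbox hq, hdiff q hq p hp⟩, hcard⟩
  · rintro ⟨d, -, hG, hcard⟩
    exact ⟨fun p hp => (hG hp).1, hcard, fun p hp q hq => (hG hp).2.trans (hG hq).2.symm⟩

lemma pairwiseDisjoint_powerset_filter_diagLine (n : ℕ) (s : Set ℤ) :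
    s.PairwiseDisjoint fun d => (diagLine n d).powerset.filter (2 ≤ ·.card) := by
  intro d _ e _ hde
  rw [Function.onFun, disjoint_left]
  intro G hG hG'
  rw [mem_filter, mem_powerset] at hG hG'
  obtain ⟨p, hp⟩ := card_pos.1 (by omega : 0 < G.card)
  exact hde ((mem_filter.1 (hG.1 hp)).2.symm.trans (mem_filter.1 (hG'.1 hp)).2)

lemma card_box (n : ℕ) : (box n).card = n * n := by
  rw [box, card_product, Nat.card_Icc, Nat.add_sub_cancel]

lemma card_filter_hasConstDiff_add_sq (n : ℕ) :
    ((box n).powerset.filter fun G => 2 ≤ G.card ∧ HasConstDiff G).card + (n + 1) ^ 2 + 2 =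
      3 * 2 ^ n := by
  rw [filter_hasConstDiff_eq_biUnion, card_biUnion (pairwiseDisjoint_powerset_filter_diagLine n _)]
  simp only [card_powerset_filter_two_le_card, card_diagLine]
  rw [Int.sum_Icc_neg_sub_natAbs n fun j => 2 ^ j - j - 1, smul_eq_mul]
  have hsum := Nat.two_mul_sum_range_two_pow_sub n
  have := Nat.lt_two_pow_self (n := n)
  have hsq : (n + 1) ^ 2 = n * (n + 1) + n + 1 := by ring
  rw [pow_succ] at hsum
  omega

end PartialIsometry

open PartialIsometry

theorem card_partial_isometries (n : ℕ) :
    {G : Finset (ℕ × ℕ) | IsPartialIsometryGraph n G}.ncard =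
    3 * 2 ^ (n + 1) - (n + 2) ^ 2 - 1 := by
  classical
  have hset : {G | IsPartialIsometryGraph n G} =
      ↑((box n).powerset.filter (IsPartialIsometryGraph n)) := by
    ext G
    rw [coe_filter]
    exact ⟨fun h => ⟨mem_powerset.2 (isPartialIsometryGraph_iff.1 h).1, h⟩, And.right⟩
  rw [hset, Set.ncard_coe_finset, card_filter_isPartialIsometryGraph,
    card_filter_hasConstSum_eq_card_filter_hasConstDiff, card_powerset_filter_card_le_one, card_box]
  have := card_filter_hasConstDiff_add_sq n
  have hsq : (n + 2) ^ 2 = n * n + 4 * n + 4 := by ring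
  have hsq' : (n + 1) ^ 2 = n * n + 2 * n + 1 := by ring
  rw [pow_succ]
  omega
end

section
/- For n ≥ m ≥ 1, the number of order-preserving partial isometries of {1,...,n} with exactly m fixed points equals the binomial coefficient C(n, m). -/
theorem count_order_preserving_partial_isometries_fix_m (n m : ℕ) (hm : 1 ≤ m) (hn : m ≤ n) :
    {G : Finset (ℕ × ℕ) | IsPartialIsometryGraph n G ∧ IsOrderPreservingGraph G ∧
      (G.filter (fun p => p.1 = p.2)).card = m}.ncard = n.choose m := by
  classical
  have hdiaginj : Function.Injective (fun x : ℕ => (x, x)) := by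
    intro a b h; exact (Prod.mk.injEq _ _ _ _ ▸ h).1
  have hset : {G : Finset (ℕ × ℕ) | IsPartialIsometryGraph n G ∧ IsOrderPreservingGraph G ∧
      (G.filter (fun p => p.1 = p.2)).card = m} =
      ↑(((Finset.Icc 1 n).powersetCard m).image
        (fun S => S.image (fun x => (x, x)))) := by
    ext G
    simp only [Set.mem_setOf_eq, Finset.coe_image, Set.mem_image, Finset.mem_coe,
      Finset.mem_powersetCard]
    constructor
    · rintro ⟨⟨hsub, hfun, _hinj, hiso⟩, hord, hcard⟩
      obtain ⟨p0, hp0⟩ : (G.filter (fun p => p.1 = p.2)).Nonempty :=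
        Finset.card_pos.mp (by omega)
      rw [Finset.mem_filter] at hp0
      obtain ⟨hp0G, hp0d⟩ := hp0
      have hdiag : ∀ p ∈ G, p.1 = p.2 := by
        intro q hq
        have hd := hiso p0 hp0G q hq
        rcases le_total q.1 p0.1 with h | h
        · have h2 := hord q hq p0 hp0G h
          omega
        · have h2 := hord p0 hp0G q hq h
          omega
      refine ⟨G.image Prod.fst, ⟨?_, ?_⟩, ?_⟩
      · intro x hx
        obtain ⟨p, hp, rfl⟩ := Finset.mem_image.mp hx
        exact (Finset.mem_product.mp (hsub hp)).1
      · have : G.filter (fun p => p.1 = p.2) = G := by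
          apply Finset.filter_true_of_mem; exact hdiag
        rw [this] at hcard
        rw [Finset.card_image_of_injOn, hcard]
        intro p hp q hq h
        exact hfun p hp q hq h
      · ext p
        constructor
        · intro hp
          obtain ⟨x, hx, rfl⟩ := Finset.mem_image.mp hp
          obtain ⟨q, hq, rfl⟩ := Finset.mem_image.mp hx
          rwa [show ((q.1, q.1) : ℕ × ℕ) = q from Prod.ext rfl (hdiag q hq)]
        · intro hp
          exact Finset.mem_image.mpr ⟨p.1, Finset.mem_image_of_mem _ hp,
            Prod.ext rfl (hdiag p hp)⟩
    · rintro ⟨S, ⟨hS, hScard⟩, rfl⟩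
      have hmem : ∀ p ∈ S.image (fun x => (x, x)), p.1 = p.2 := by
        intro p hp
        obtain ⟨x, _, rfl⟩ := Finset.mem_image.mp hp
        rfl
      refine ⟨⟨?_, ?_, ?_, ?_⟩, ?_, ?_⟩
      · intro p hp
        obtain ⟨x, hx, rfl⟩ := Finset.mem_image.mp hp
        exact Finset.mem_product.mpr ⟨hS hx, hS hx⟩
      · intro p hp q hq h
        have h1 := hmem p hp; have h2 := hmem q hq
        exact Prod.ext h (by omega)
      · intro p hp q hq h
        have h1 := hmem p hp; have h2 := hmem q hq
        exact Prod.ext (by omega) h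
      · intro p hp q hq
        have h1 := hmem p hp; have h2 := hmem q hq
        rw [h1, h2]
      · intro p hp q hq h
        have h1 := hmem p hp; have h2 := hmem q hq
        omega
      · rw [Finset.filter_true_of_mem hmem, Finset.card_image_of_injective _ hdiaginj,
          hScard]
  rw [hset, Set.ncard_coe_finset,
    Finset.card_image_of_injective _ (Finset.image_injective hdiaginj),
    Finset.card_powersetCard, Nat.card_Icc, Nat.add_sub_cancel]
end

section
/- For n ≥ m ≥ 2, the number of partial isometries of {1,...,n} with exactly m fixed points equals the binomial coefficient C(n, m). -/
theorem count_partial_isometries_fix_m (n m : ℕ) (hm : 2 ≤ m) (hn : m ≤ n) :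
    {G : Finset (ℕ × ℕ) | IsPartialIsometryGraph n G ∧
      (G.filter (fun p => p.1 = p.2)).card = m}.ncard = n.choose m := by
  classical
  have hinjd : Function.Injective (fun a : ℕ => (a, a)) := fun a b h => congrArg Prod.fst h
  have key : {G : Finset (ℕ × ℕ) | IsPartialIsometryGraph n G ∧
      (G.filter (fun p => p.1 = p.2)).card = m}
      = ↑(((Finset.Icc 1 n).powersetCard m).image
          (fun S => S.image (fun a => (a, a)))) := by
    ext G
    simp only [Set.mem_setOf_eq, Finset.coe_image, Set.mem_image, Finset.mem_coe,
      Finset.mem_powersetCard]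
    constructor
    · rintro ⟨⟨hsub, hfun, hinj, hiso⟩, hcard⟩
      have hdiag : ∀ p ∈ G, p.1 = p.2 := by
        have h2 : 1 < (G.filter (fun p => p.1 = p.2)).card := by omega
        obtain ⟨p, hp, q, hq, hpq⟩ := Finset.one_lt_card.mp h2
        simp only [Finset.mem_filter] at hp hq
        intro r hr
        have h1 := hiso r hr p hp.1
        have h2' := hiso r hr q hq.1
        have hab : p.1 ≠ q.1 := fun h => hpq (hfun p hp.1 q hq.1 h)
        have hp2 := hp.2
        have hq2 := hq.2
        omega
      have hGfilter : G.filter (fun p => p.1 = p.2) = G := Finset.filter_eq_self.mpr hdiag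
      have hGcard : G.card = m := by rw [← hGfilter]; exact hcard
      refine ⟨G.image Prod.fst, ⟨?_, ?_⟩, ?_⟩
      · intro a ha
        obtain ⟨p, hp, rfl⟩ := Finset.mem_image.mp ha
        exact (Finset.mem_product.mp (hsub hp)).1
      · rw [Finset.card_image_of_injOn, hGcard]
        intro p hp q hq h
        exact hfun p hp q hq h
      · ext p
        simp only [Finset.mem_image]
        constructor
        · rintro ⟨a, ⟨q, hq, rfl⟩, rfl⟩
          have := hdiag q hq
          have : q = (q.1, q.1) := by
            ext <;> simp [this.symm]
          rwa [← this]
        · intro hp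
          exact ⟨p.1, ⟨p, hp, rfl⟩, by ext <;> simp [hdiag p hp]⟩
    · rintro ⟨S, ⟨hS, hScard⟩, rfl⟩
      have hfilter : (S.image (fun a => (a, a))).filter (fun p => p.1 = p.2)
          = S.image (fun a => (a, a)) := by
        apply Finset.filter_eq_self.mpr
        intro p hp
        obtain ⟨a, _, rfl⟩ := Finset.mem_image.mp hp
        rfl
      refine ⟨⟨?_, ?_, ?_, ?_⟩, ?_⟩
      · intro p hp
        obtain ⟨a, ha, rfl⟩ := Finset.mem_image.mp hp
        exact Finset.mem_product.mpr ⟨hS ha, hS ha⟩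
      · intro p hp q hq h
        obtain ⟨a, _, rfl⟩ := Finset.mem_image.mp hp
        obtain ⟨b, _, rfl⟩ := Finset.mem_image.mp hq
        simp_all
      · intro p hp q hq h
        obtain ⟨a, _, rfl⟩ := Finset.mem_image.mp hp
        obtain ⟨b, _, rfl⟩ := Finset.mem_image.mp hq
        simp_all
      · intro p hp q hq
        obtain ⟨a, _, rfl⟩ := Finset.mem_image.mp hp
        obtain ⟨b, _, rfl⟩ := Finset.mem_image.mp hq
        rfl
      · rw [hfilter, Finset.card_image_of_injective _ hinjd, hScard]
  rw [key, Set.ncard_coe_finset,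
    Finset.card_image_of_injective _ (Finset.image_injective hinjd),
    Finset.card_powersetCard, Nat.card_Icc]
  congr 1
end

section
/- The number of partial isometries of the chain {1,...,2n} with exactly one fixed point equals 2(2^{2n} − 1)/3, for all n ≥ 1. -/
def antidiag (N x : ℕ) : Finset (ℕ × ℕ) :=
  (Finset.Icc (max 1 (2*x - N)) (min N (2*x - 1))).image (fun a => (a, 2*x - a))

def Sx (N x : ℕ) : Finset (Finset (ℕ × ℕ)) :=
  ((antidiag N x).erase (x,x)).powerset.image (insert (x,x))

lemma mem_antidiag {N x : ℕ} {q : ℕ × ℕ} :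
    q ∈ antidiag N x ↔ 1 ≤ q.1 ∧ q.1 ≤ N ∧ 1 ≤ q.2 ∧ q.2 ≤ N ∧ q.1 + q.2 = 2*x := by
  simp only [antidiag, Finset.mem_image, Finset.mem_Icc, max_le_iff, le_min_iff]
  constructor
  · rintro ⟨a, ⟨⟨h1, h2⟩, h3, h4⟩, rfl⟩
    dsimp only
    omega
  · rintro ⟨h1, h2, h3, h4, h5⟩
    refine ⟨q.1, by omega, ?_⟩
    have : 2*x - q.1 = q.2 := by omega
    rw [this]

lemma mem_Sx {N x : ℕ} (hx1 : 1 ≤ x) (hxN : x ≤ N) {G : Finset (ℕ × ℕ)} :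
    G ∈ Sx N x ↔ (x,x) ∈ G ∧ G ⊆ antidiag N x := by
  have hxx : (x,x) ∈ antidiag N x := by rw [mem_antidiag]; dsimp only; omega
  constructor
  · rintro hG
    simp only [Sx, Finset.mem_image, Finset.mem_powerset] at hG
    obtain ⟨H, hH, rfl⟩ := hG
    refine ⟨Finset.mem_insert_self _ _, Finset.insert_subset hxx (hH.trans (Finset.erase_subset _ _))⟩
  · rintro ⟨h1, h2⟩
    simp only [Sx, Finset.mem_image, Finset.mem_powerset]
    exact ⟨G.erase (x,x), Finset.erase_subset_erase _ h2, Finset.insert_erase h1⟩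

lemma card_Sx {N x : ℕ} (hx1 : 1 ≤ x) (hxN : x ≤ N) :
    (Sx N x).card = 2 ^ ((antidiag N x).card - 1) := by
  have hxx : (x,x) ∈ antidiag N x := by rw [mem_antidiag]; dsimp only; omega
  rw [Sx, Finset.card_image_of_injOn, Finset.card_powerset, Finset.card_erase_of_mem hxx]
  intro H1 h1 H2 h2 he
  simp only [Finset.coe_powerset, Set.mem_preimage, Finset.mem_coe, Set.mem_powerset_iff,
    Finset.coe_subset] at h1 h2
  have n1 : (x,x) ∉ H1 := fun h => (Finset.mem_erase.mp (h1 h)).1 rfl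
  have n2 : (x,x) ∉ H2 := fun h => (Finset.mem_erase.mp (h2 h)).1 rfl
  rw [← Finset.erase_insert n1, ← Finset.erase_insert n2, he]

lemma card_antidiag {N x : ℕ} (hx1 : 1 ≤ x) (hxN : x ≤ N) :
    (antidiag N x).card = min N (2*x - 1) + 1 - max 1 (2*x - N) := by
  rw [antidiag, Finset.card_image_of_injOn (fun a _ b _ h => congrArg Prod.fst h),
    Nat.card_Icc]

lemma Sx_isPIG {N x : ℕ} (hx1 : 1 ≤ x) (hxN : x ≤ N) {G : Finset (ℕ × ℕ)}
    (hG : G ∈ Sx N x) :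
    IsPartialIsometryGraph N G ∧ (G.filter (fun p => p.1 = p.2)).card = 1 := by
  rw [mem_Sx hx1 hxN] at hG
  obtain ⟨hxx, hsub⟩ := hG
  have hmem : ∀ q ∈ G, 1 ≤ q.1 ∧ q.1 ≤ N ∧ 1 ≤ q.2 ∧ q.2 ≤ N ∧ q.1 + q.2 = 2*x :=
    fun q hq => mem_antidiag.mp (hsub hq)
  constructor
  · refine ⟨?_, ?_, ?_, ?_⟩
    · intro q hq
      obtain ⟨h1, h2, h3, h4, h5⟩ := hmem q hq
      simp only [Finset.mem_product, Finset.mem_Icc]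
      exact ⟨⟨h1, h2⟩, ⟨h3, h4⟩⟩
    · intro p hp q hq h
      obtain ⟨_, _, _, _, h5⟩ := hmem p hp
      obtain ⟨_, _, _, _, h5'⟩ := hmem q hq
      exact Prod.ext h (by omega)
    · intro p hp q hq h
      obtain ⟨_, _, _, _, h5⟩ := hmem p hp
      obtain ⟨_, _, _, _, h5'⟩ := hmem q hq
      exact Prod.ext (by omega) h
    · intro p hp q hq
      obtain ⟨_, _, _, _, h5⟩ := hmem p hp
      obtain ⟨_, _, _, _, h5'⟩ := hmem q hq
      omega
  · have : G.filter (fun p => p.1 = p.2) = {(x,x)} := by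
      apply Finset.Subset.antisymm
      · intro q hq
        rw [Finset.mem_filter] at hq
        obtain ⟨hq1, hq2⟩ := hq
        obtain ⟨_, _, _, _, h5⟩ := hmem q hq1
        have : q = (x,x) := Prod.ext (by omega) (by omega)
        simp [this]
      · intro q hq
        rw [Finset.mem_singleton] at hq
        subst hq
        exact Finset.mem_filter.mpr ⟨hxx, rfl⟩
    rw [this, Finset.card_singleton]

lemma key_eq (N : ℕ) :
    {G : Finset (ℕ × ℕ) | IsPartialIsometryGraph N G ∧
      (G.filter (fun p => p.1 = p.2)).card = 1}
    = ↑((Finset.Icc 1 N).biUnion (Sx N)) := by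
  ext G
  simp only [Set.mem_setOf_eq, Finset.coe_biUnion, Set.mem_iUnion, Finset.mem_coe,
    Finset.mem_Icc, exists_prop]
  constructor
  · rintro ⟨⟨hsub, hfun, hinj, hdist⟩, hcard⟩
    obtain ⟨p, hp⟩ := Finset.card_eq_one.mp hcard
    have hpG : p ∈ G ∧ p.1 = p.2 := by
      have : p ∈ G.filter (fun p => p.1 = p.2) := by rw [hp]; exact Finset.mem_singleton_self _
      exact Finset.mem_filter.mp this
    set x := p.1 with hx
    have hpx : p = (x, x) := Prod.ext rfl hpG.2.symm
    have hxb : 1 ≤ x ∧ x ≤ N := by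
      have := hsub hpG.1
      simp only [Finset.mem_product, Finset.mem_Icc] at this
      exact this.1
    refine ⟨x, hxb, (mem_Sx hxb.1 hxb.2).mpr ⟨hpx ▸ hpG.1, ?_⟩⟩
    intro q hq
    have hqb := hsub hq
    simp only [Finset.mem_product, Finset.mem_Icc] at hqb
    rw [mem_antidiag]
    refine ⟨hqb.1.1, hqb.1.2, hqb.2.1, hqb.2.2, ?_⟩
    by_cases hqf : q.1 = q.2
    · have : q ∈ G.filter (fun p => p.1 = p.2) := Finset.mem_filter.mpr ⟨hq, hqf⟩
      rw [hp, Finset.mem_singleton] at this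
      rw [this, hpx]
      dsimp only
      omega
    · have := hdist q hq p hpG.1
      rw [hpx] at this
      dsimp only at this
      omega
  · rintro ⟨x, ⟨hx1, hxN⟩, hG⟩
    exact Sx_isPIG hx1 hxN hG

lemma geo (n : ℕ) : 3 * (∑ i ∈ Finset.range n, 4^i) + 1 = 4^n := by
  induction n with
  | zero => simp
  | succ k ih =>
    rw [Finset.sum_range_succ, pow_succ]
    linarith

lemma total_card (n : ℕ) (hn : 1 ≤ n) :
    3 * ((Finset.Icc 1 (2*n)).biUnion (Sx (2*n))).card + 2 = 2 * 2 ^ (2*n) := by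
  have hdisj : ∀ x ∈ Finset.Icc 1 (2*n), ∀ y ∈ Finset.Icc 1 (2*n), x ≠ y →
      Disjoint (Sx (2*n) x) (Sx (2*n) y) := by
    intro x hx y hy hxy
    rw [Finset.mem_Icc] at hx hy
    rw [Finset.disjoint_left]
    intro G hGx hGy
    rw [mem_Sx hx.1 hx.2] at hGx
    rw [mem_Sx hy.1 hy.2] at hGy
    have := mem_antidiag.mp (hGy.2 hGx.1)
    dsimp only at this
    omega
  rw [Finset.card_biUnion hdisj]
  have hcards : ∀ x ∈ Finset.Icc 1 (2*n), (Sx (2*n) x).card = 4 ^ (min (x-1) (2*n - x)) := by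
    intro x hx
    rw [Finset.mem_Icc] at hx
    rw [card_Sx hx.1 hx.2, card_antidiag hx.1 hx.2]
    have : min (2*n) (2*x-1) + 1 - max 1 (2*x - 2*n) - 1 = 2 * min (x-1) (2*n - x) := by
      omega
    rw [this, pow_mul]
    norm_num
  rw [Finset.sum_congr rfl hcards]
  have hsplit : ∑ x ∈ Finset.Icc 1 (2*n), 4 ^ (min (x-1) (2*n - x))
      = ∑ i ∈ Finset.range (2*n), 4 ^ (min i (2*n - 1 - i)) := by
    have : Finset.Icc 1 (2*n) = Finset.Ico 1 (2*n+1) := by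
      ext a; simp [Nat.lt_succ_iff]
    rw [this, Finset.sum_Ico_eq_sum_range]
    apply Finset.sum_congr (by congr 1)
    intro i hi
    rw [Finset.mem_range] at hi
    congr 1
    omega
  rw [hsplit]
  have h2n : 2*n = n + n := by omega
  rw [h2n, Finset.sum_range_add]
  have e1 : ∀ i ∈ Finset.range n, 4 ^ (min i (n + n - 1 - i)) = 4 ^ i := by
    intro i hi
    rw [Finset.mem_range] at hi
    congr 1
    omega
  have e2 : ∀ i ∈ Finset.range n, 4 ^ (min (n + i) (n + n - 1 - (n + i))) = 4 ^ (n - 1 - i) := by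
    intro i hi
    rw [Finset.mem_range] at hi
    congr 1
    omega
  rw [Finset.sum_congr rfl e1, Finset.sum_congr rfl e2]
  have e3 : ∑ i ∈ Finset.range n, 4 ^ (n - 1 - i) = ∑ i ∈ Finset.range n, 4 ^ i := by
    rw [← Finset.sum_range_reflect]
    apply Finset.sum_congr rfl
    intro i hi
    rw [Finset.mem_range] at hi
    congr 1
    omega
  rw [e3]
  have hg := geo n
  have : (2:ℕ) ^ (n+n) = 4 ^ n := by
    rw [← two_mul, pow_mul]; norm_num
  rw [this]
  have e4 : (Finset.range n).sum (HPow.hPow 4) = ∑ i ∈ Finset.range n, (4:ℕ)^i := rfl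
  rw [e4]
  omega

theorem count_partial_isometries_one_fixed_point_even (n : ℕ) (hn : 1 ≤ n) :
    ({G : Finset (ℕ × ℕ) | IsPartialIsometryGraph (2 * n) G ∧
      (G.filter (fun p => p.1 = p.2)).card = 1}.ncard : ℚ) =
    2 * (2 ^ (2 * n) - 1) / 3 := by
  rw [key_eq, Set.ncard_coe_finset]
  have h := total_card n hn
  have hc : ((((Finset.Icc 1 (2*n)).biUnion (Sx (2*n))).card : ℚ)) * 3 + 2 = 2 * 2 ^ (2*n) := by
    exact_mod_cast by linarith [h]
  field_simp
  linarith [hc]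
end

section
/- For all natural numbers n ≥ 2, the identity ∑_{p=2}^{n} ((2n − p + 1)/(p + 1)) · C(n, p) = 3·2^n − n² − 2n − 3 holds. -/
/-!
Since `(n - p) C(n,p) = (p + 1) C(n,p+1)`, each summand equals `C(n,p) + 2 C(n,p+1)`. Over the
full range `0 ≤ p ≤ n` these add up to `2^n + 2 (2^n - 1)`; the terms `p = 0` and `p = 1`
contribute `2n + 1` and `n²`.
-/

open Finset

theorem Nat.cast_choose_succ_right_eq {R : Type*} [CommRing R] (n p : ℕ) :
    (n.choose (p + 1) : R) * (p + 1) = n.choose p * (n - p) := by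
  rcases le_or_gt p n with hpn | hnp
  · rw [← Nat.cast_sub hpn]
    exact_mod_cast congrArg (Nat.cast : ℕ → R) (Nat.choose_succ_right_eq n p)
  · simp [Nat.choose_eq_zero_of_lt hnp, Nat.choose_eq_zero_of_lt (hnp.trans (lt_add_one p))]

theorem div_mul_choose_eq_choose_add_two_mul_choose_succ {K : Type*} [Field K] [CharZero K]
    (n p : ℕ) :
    (2 * (n : K) - p + 1) / (p + 1) * n.choose p = n.choose p + 2 * n.choose (p + 1) := by
  have hp : (p : K) + 1 ≠ 0 := by exact_mod_cast p.succ_ne_zero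
  rw [div_mul_eq_mul_div, div_eq_iff hp]
  linear_combination -2 * Nat.cast_choose_succ_right_eq (R := K) n p

theorem Nat.sum_range_choose_succ_add_one (n : ℕ) :
    ∑ p ∈ range (n + 1), n.choose (p + 1) + 1 = 2 ^ n := by
  rw [sum_range_succ, Nat.choose_eq_zero_of_lt (lt_add_one n), add_zero, ← Nat.sum_range_choose,
    sum_range_succ' _ n, Nat.choose_zero_right]

theorem sum_range_div_mul_choose {K : Type*} [Field K] [CharZero K] (n : ℕ) :
    ∑ p ∈ range (n + 1), (2 * (n : K) - p + 1) / (p + 1) * n.choose p = 3 * 2 ^ n - 2 := by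
  have hchoose : ∑ p ∈ range (n + 1), (n.choose p : K) = 2 ^ n := by
    exact_mod_cast Nat.sum_range_choose n
  have hchoose_succ : ∑ p ∈ range (n + 1), (n.choose (p + 1) : K) + 1 = 2 ^ n := by
    exact_mod_cast Nat.sum_range_choose_succ_add_one n
  simp only [div_mul_choose_eq_choose_add_two_mul_choose_succ, sum_add_distrib, ← mul_sum]
  linear_combination hchoose + 2 * hchoose_succ

theorem sum_identity (n : ℕ) (hn : 2 ≤ n) :
    ∑ p ∈ Finset.Icc 2 n,
      ((2 * (n : ℚ) - (p : ℚ) + 1) / ((p : ℚ) + 1)) * (n.choose p : ℚ) =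
    3 * 2 ^ n - (n : ℚ) ^ 2 - 2 * (n : ℚ) - 3 := by
  have hsplit := sum_range_add_sum_Ico
    (fun p : ℕ => (2 * (n : ℚ) - p + 1) / (p + 1) * n.choose p) (by omega : 2 ≤ n + 1)
  rw [sum_range_div_mul_choose, sum_range_succ, sum_range_one] at hsplit
  rw [← Finset.Ico_add_one_right_eq_Icc]
  simp only [Nat.cast_zero, Nat.cast_one, Nat.choose_zero_right, Nat.choose_one_right] at hsplit
  linear_combination hsplit
end
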